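/- arXiv:1801.05921 — 7 statements merged into one kernel-verified Lean document; each statement's English description precedes it below -/
import Mathlib

section
/- If M ∈ ℍ^{d1+d2} is a nonnegative definite Hermitian matrix with block structure M = [[A, X],[X*, B]] where A ∈ ℍ^{d1} and B ∈ ℍ^{d2}, then the spectral norm satisfies ‖M‖ ≤ ‖A‖ + ‖B‖. -/
open Matrix
open scoped Matrix.Norms.L2Operator ComplexOrder

/-- If `M = [[A, X], [Xᴴ, B]]` is positive semidefinite, then `‖M‖ ≤ ‖A‖ + ‖B‖`
in the spectral norm. -/
theorem psd_block_norm_le (d1 d2 : ℕ) (A : Matrix (Fin d1) (Fin d1) ℂ)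
    (B : Matrix (Fin d2) (Fin d2) ℂ) (X : Matrix (Fin d1) (Fin d2) ℂ)
    (hM : (Matrix.fromBlocks A X Xᴴ B).PosSemidef) :
    ‖Matrix.fromBlocks A X Xᴴ B‖ ≤ ‖A‖ + ‖B‖ := by
  obtain ⟨N, hN⟩ : ∃ N : Matrix (Fin d1 ⊕ Fin d2) (Fin d1 ⊕ Fin d2) ℂ,
      Matrix.fromBlocks A X Xᴴ B = Nᴴ * N := by
    open scoped MatrixOrder in
    exact CStarAlgebra.nonneg_iff_eq_star_mul_self.mp hM.nonneg
  set C := N.toCols₁ with hC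
  set D := N.toCols₂ with hD
  have hNcd : N = fromCols C D := (fromCols_toCols N).symm
  have hblocks : Matrix.fromBlocks A X Xᴴ B
      = fromBlocks (Cᴴ * C) (Cᴴ * D) (Dᴴ * C) (Dᴴ * D) := by
    rw [hN, hNcd, conjTranspose_fromCols_eq_fromRows_conjTranspose,
      fromRows_mul_fromCols]
  have hA : A = Cᴴ * C := congrArg Matrix.toBlocks₁₁ hblocks
  have hB : B = Dᴴ * D := congrArg Matrix.toBlocks₂₂ hblocks
  have h1 : ‖Matrix.fromBlocks A X Xᴴ B‖ = ‖N‖ * ‖N‖ := by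
    rw [hN, Matrix.l2_opNorm_conjTranspose_mul_self]
  have h2 : ‖N‖ * ‖N‖ = ‖N * Nᴴ‖ := by
    conv_rhs => rw [show N * Nᴴ = (Nᴴ)ᴴ * Nᴴ by rw [conjTranspose_conjTranspose]]
    rw [Matrix.l2_opNorm_conjTranspose_mul_self, Matrix.l2_opNorm_conjTranspose]
  have h3 : N * Nᴴ = C * Cᴴ + D * Dᴴ := by
    rw [hNcd, conjTranspose_fromCols_eq_fromRows_conjTranspose,
      fromCols_mul_fromRows]
  have h4 : ‖C * Cᴴ + D * Dᴴ‖ ≤ ‖C * Cᴴ‖ + ‖D * Dᴴ‖ := norm_add_le _ _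
  have h5 : ‖C * Cᴴ‖ = ‖A‖ := by
    rw [hA, Matrix.l2_opNorm_conjTranspose_mul_self,
      show C * Cᴴ = (Cᴴ)ᴴ * Cᴴ by rw [conjTranspose_conjTranspose],
      Matrix.l2_opNorm_conjTranspose_mul_self, Matrix.l2_opNorm_conjTranspose]
  have h6 : ‖D * Dᴴ‖ = ‖B‖ := by
    rw [hB, Matrix.l2_opNorm_conjTranspose_mul_self,
      show D * Dᴴ = (Dᴴ)ᴴ * Dᴴ by rw [conjTranspose_conjTranspose],
      Matrix.l2_opNorm_conjTranspose_mul_self, Matrix.l2_opNorm_conjTranspose]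
  rw [h1, h2, h3]
  rw [h5, h6] at h4
  exact h4
end

section
/- If M ∈ ℍ^{d1+d2} is a nonnegative definite Hermitian matrix with block structure M = [[A, X],[X*, B]], then for any unitarily invariant norm |||·|||, one has |||M||| ≤ |||A ⊕ 0||| + |||0 ⊕ B|||, where A ⊕ 0 and 0 ⊕ B denote the block-diagonal embeddings of A and B into (d1+d2)×(d1+d2) matrices. -/
open Matrix
open scoped ComplexOrder InnerProductSpace

section Aux

variable {n : Type*} [Fintype n] [DecidableEq n]

private lemma toEuclideanLin_mul' (A B : Matrix n n ℂ) :
    Matrix.toEuclideanLin (A * B) =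
      (Matrix.toEuclideanLin A) ∘ₗ (Matrix.toEuclideanLin B) := by
  ext x
  simp [Matrix.toEuclideanLin_apply, Matrix.mulVec_mulVec]

private lemma toEuclideanLin_one' :
    Matrix.toEuclideanLin (1 : Matrix n n ℂ) = LinearMap.id := by
  ext x
  simp [Matrix.toEuclideanLin_apply]

/-- Polar-type statement: `C * Cᴴ` is unitarily similar to `Cᴴ * C`. -/
private lemma exists_unitary_conj (C : Matrix n n ℂ) :
    ∃ U ∈ Matrix.unitaryGroup n ℂ, C * Cᴴ = U * (Cᴴ * C) * star U := by
  have hCC := Matrix.posSemidef_conjTranspose_mul_self C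
  set P : Matrix n n ℂ := (open scoped MatrixOrder in CFC.sqrt (Cᴴ * C)) with hPdef
  have hP : P.PosSemidef := (open scoped MatrixOrder in (CFC.sqrt_nonneg (Cᴴ * C)).posSemidef)
  have hPP : P * P = Cᴴ * C := (open scoped MatrixOrder in CFC.sqrt_mul_sqrt_self (Cᴴ * C) hCC.nonneg)
  set p := Matrix.toEuclideanLin P with hp
  set c := Matrix.toEuclideanLin C with hc
  have hadj : (LinearMap.adjoint p) ∘ₗ p = (LinearMap.adjoint c) ∘ₗ c := by
    rw [hp, hc, ← Matrix.toEuclideanLin_conjTranspose_eq_adjoint,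
      ← Matrix.toEuclideanLin_conjTranspose_eq_adjoint,
      ← toEuclideanLin_mul', ← toEuclideanLin_mul', hP.1, hPP]
  have hinner : ∀ x y : EuclideanSpace ℂ n, ⟪p x, p y⟫_ℂ = ⟪c x, c y⟫_ℂ := by
    intro x y
    calc ⟪p x, p y⟫_ℂ = ⟪x, ((LinearMap.adjoint p) ∘ₗ p) y⟫_ℂ := by
          simp [LinearMap.adjoint_inner_right]
      _ = ⟪x, ((LinearMap.adjoint c) ∘ₗ c) y⟫_ℂ := by rw [hadj]
      _ = ⟪c x, c y⟫_ℂ := by simp [LinearMap.adjoint_inner_right]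
  have hnorm : ∀ x, ‖c x‖ = ‖p x‖ := by
    intro x
    have h2 : ‖p x‖ ^ 2 = ‖c x‖ ^ 2 := by
      rw [norm_sq_eq_re_inner (𝕜 := ℂ), norm_sq_eq_re_inner (𝕜 := ℂ), hinner]
    have h3 := (sq_eq_sq_iff_abs_eq_abs _ _).mp h2
    rwa [abs_of_nonneg (norm_nonneg _), abs_of_nonneg (norm_nonneg _), eq_comm] at h3
  have hker : LinearMap.ker p ≤ LinearMap.ker c := by
    intro x hx
    rw [LinearMap.mem_ker] at hx ⊢
    rw [← norm_eq_zero, hnorm, hx, norm_zero]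
  let cbar := (LinearMap.ker p).liftQ c hker
  let e := p.quotKerEquivRange
  let L0 : LinearMap.range p →ₗ[ℂ] EuclideanSpace ℂ n :=
    cbar ∘ₗ (e.symm : LinearMap.range p →ₗ[ℂ] _)
  have hL0 : ∀ x, L0 ⟨p x, LinearMap.mem_range_self p x⟩ = c x := by
    intro x
    have h1 : e.symm ⟨p x, LinearMap.mem_range_self p x⟩ = Submodule.Quotient.mk x :=
      p.quotKerEquivRange_symm_apply_image x (LinearMap.mem_range_self p x)
    simp [L0, cbar, h1]
  have hL0norm : ∀ s : LinearMap.range p, ‖L0 s‖ = ‖s‖ := by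
    rintro ⟨-, x, rfl⟩
    rw [hL0 x]
    rw [Submodule.coe_norm]
    exact hnorm x
  let L : (LinearMap.range p) →ₗᵢ[ℂ] EuclideanSpace ℂ n := ⟨L0, hL0norm⟩
  let W := L.extend
  have hW : ∀ x, W (p x) = c x := by
    intro x
    have h1 := L.extend_apply ⟨p x, LinearMap.mem_range_self p x⟩
    rw [show ((⟨p x, LinearMap.mem_range_self p x⟩ : LinearMap.range p) :
      EuclideanSpace ℂ n) = p x from rfl] at h1
    rw [h1]
    exact hL0 x
  let U := Matrix.toEuclideanLin.symm W.toLinearMap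
  have hU : Matrix.toEuclideanLin U = W.toLinearMap :=
    Matrix.toEuclideanLin.apply_symm_apply _
  have hUstar : Uᴴ * U = 1 := by
    apply Matrix.toEuclideanLin.injective
    rw [toEuclideanLin_mul', Matrix.toEuclideanLin_conjTranspose_eq_adjoint, hU,
      toEuclideanLin_one']
    refine LinearMap.ext fun x => ext_inner_right ℂ fun y => ?_
    simp only [LinearMap.comp_apply, LinearMap.id_apply]
    rw [LinearMap.adjoint_inner_left]
    exact W.inner_map_map x y
  have hUmem : U ∈ Matrix.unitaryGroup n ℂ := by
    rw [Matrix.mem_unitaryGroup_iff', Matrix.star_eq_conjTranspose]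
    exact hUstar
  have hUP : U * P = C := by
    apply Matrix.toEuclideanLin.injective
    rw [toEuclideanLin_mul', hU]
    exact LinearMap.ext fun x => hW x
  refine ⟨U, hUmem, ?_⟩
  rw [Matrix.star_eq_conjTranspose, ← hPP]
  conv_lhs => rw [← hUP]
  rw [Matrix.conjTranspose_mul, hP.1]
  simp only [Matrix.mul_assoc]

end Aux

/-- For a positive semidefinite block matrix `M = [[A, X], [Xᴴ, B]]` and any unitarily
invariant norm `|||·|||`, one has `|||M||| ≤ |||A ⊕ 0||| + |||0 ⊕ B|||`. -/
theorem psd_block_unitarily_invariant_norm_le (d1 d2 : ℕ)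
    (f : Matrix (Fin d1 ⊕ Fin d2) (Fin d1 ⊕ Fin d2) ℂ → ℝ)
    (hf_add : ∀ M N, f (M + N) ≤ f M + f N)
    (hf_inv : ∀ (U V : Matrix.unitaryGroup (Fin d1 ⊕ Fin d2) ℂ)
      (M : Matrix (Fin d1 ⊕ Fin d2) (Fin d1 ⊕ Fin d2) ℂ),
      f ((U : Matrix (Fin d1 ⊕ Fin d2) (Fin d1 ⊕ Fin d2) ℂ) * M *
        (V : Matrix (Fin d1 ⊕ Fin d2) (Fin d1 ⊕ Fin d2) ℂ)) = f M)
    (A : Matrix (Fin d1) (Fin d1) ℂ) (B : Matrix (Fin d2) (Fin d2) ℂ)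
    (X : Matrix (Fin d1) (Fin d2) ℂ)
    (hM : (Matrix.fromBlocks A X Xᴴ B).PosSemidef) :
    f (Matrix.fromBlocks A X Xᴴ B)
      ≤ f (Matrix.fromBlocks A 0 0 0) + f (Matrix.fromBlocks 0 0 0 B) := by
  set M : Matrix (Fin d1 ⊕ Fin d2) (Fin d1 ⊕ Fin d2) ℂ := Matrix.fromBlocks A X Xᴴ B with hMdef
  set S : Matrix (Fin d1 ⊕ Fin d2) (Fin d1 ⊕ Fin d2) ℂ := (open scoped MatrixOrder in CFC.sqrt M) with hSdef
  have hS : S.PosSemidef := (open scoped MatrixOrder in (CFC.sqrt_nonneg M).posSemidef)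
  have hSS : S * S = M := (open scoped MatrixOrder in CFC.sqrt_mul_sqrt_self M hM.nonneg)
  have hSh : Sᴴ = S := hS.1
  set P : Matrix (Fin d1 ⊕ Fin d2) (Fin d1 ⊕ Fin d2) ℂ := Matrix.fromBlocks 1 0 0 0 with hPdef
  set Q : Matrix (Fin d1 ⊕ Fin d2) (Fin d1 ⊕ Fin d2) ℂ := Matrix.fromBlocks 0 0 0 1 with hQdef
  have hPh : Pᴴ = P := by simp [hPdef, Matrix.fromBlocks_conjTranspose]
  have hQh : Qᴴ = Q := by simp [hQdef, Matrix.fromBlocks_conjTranspose]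
  have hPP : P * P = P := by simp [hPdef, Matrix.fromBlocks_multiply]
  have hQQ : Q * Q = Q := by simp [hQdef, Matrix.fromBlocks_multiply]
  have hPQ : P + Q = 1 := by
    rw [hPdef, hQdef, Matrix.fromBlocks_add, ← Matrix.fromBlocks_one]
    simp
  have hM1 : M = S * P * S + S * Q * S := by
    rw [← Matrix.add_mul, ← Matrix.mul_add, hPQ, Matrix.mul_one, hSS]
  -- first block
  have h1a : (P * S)ᴴ * (P * S) = S * P * S := by
    rw [Matrix.conjTranspose_mul, hSh, hPh, Matrix.mul_assoc, ← Matrix.mul_assoc P P S, hPP,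
      ← Matrix.mul_assoc]
  have h1b : (P * S) * (P * S)ᴴ = Matrix.fromBlocks A 0 0 0 := by
    rw [Matrix.conjTranspose_mul, hSh, hPh]
    have : P * S * (S * P) = P * M * P := by
      rw [← hSS]; simp only [Matrix.mul_assoc]
    rw [this, hMdef, hPdef]
    simp [Matrix.fromBlocks_multiply]
  have h2a : (Q * S)ᴴ * (Q * S) = S * Q * S := by
    rw [Matrix.conjTranspose_mul, hSh, hQh, Matrix.mul_assoc, ← Matrix.mul_assoc Q Q S, hQQ,
      ← Matrix.mul_assoc]
  have h2b : (Q * S) * (Q * S)ᴴ = Matrix.fromBlocks 0 0 0 B := by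
    rw [Matrix.conjTranspose_mul, hSh, hQh]
    have : Q * S * (S * Q) = Q * M * Q := by
      rw [← hSS]; simp only [Matrix.mul_assoc]
    rw [this, hMdef, hQdef]
    simp [Matrix.fromBlocks_multiply]
  obtain ⟨U1, hU1mem, hU1⟩ := exists_unitary_conj (P * S)
  obtain ⟨U2, hU2mem, hU2⟩ := exists_unitary_conj (Q * S)
  have e1 : f (S * P * S) = f (Matrix.fromBlocks A 0 0 0) := by
    have h := hf_inv ⟨U1, hU1mem⟩ ⟨star U1, Unitary.star_mem hU1mem⟩ (S * P * S)
    rw [h1a, h1b] at hU1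
    rw [hU1]
    exact h.symm
  have e2 : f (S * Q * S) = f (Matrix.fromBlocks 0 0 0 B) := by
    have h := hf_inv ⟨U2, hU2mem⟩ ⟨star U2, Unitary.star_mem hU2mem⟩ (S * Q * S)
    rw [h2a, h2b] at hU2
    rw [hU2]
    exact h.symm
  calc f M = f (S * P * S + S * Q * S) := by rw [← hM1]
    _ ≤ f (S * P * S) + f (S * Q * S) := hf_add _ _
    _ = f (Matrix.fromBlocks A 0 0 0) + f (Matrix.fromBlocks 0 0 0 B) := by rw [e1, e2]
end

section
/- If a real random variable X satisfies P(|X| ≥ a_0 + a_1 √u + a_2 u) ≤ e^{−u} for all u ≥ 1 and constants 0 ≤ a_0, a_1, a_2 < ∞, then there exists an absolute constant C > 0 such that (E|X|^p)^{1/p} ≤ C (a_0 + a_1 √p + a_2 p) for all p ≥ 1. -/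
set_option maxHeartbeats 1000000
open MeasureTheory

lemma aux_rpow {q x : ℝ} (hq : 0 < q) (hx : 0 ≤ x) :
    x ^ q ≤ (2*q) ^ q * Real.exp (x/2) := by
  rcases hx.eq_or_lt with h|h
  · rw [← h, Real.zero_rpow hq.ne']
    positivity
  · have h2q : (0:ℝ) < 2*q := by linarith
    have hlog : Real.log (x / (2*q)) ≤ x/(2*q) - 1 :=
      Real.log_le_sub_one_of_pos (by positivity)
    have h1 : Real.log (x/(2*q)) * q ≤ x/2 - q := by
      have h2 : (x/(2*q) - 1) * q = x/2 - q := by field_simp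
      have h3 := mul_le_mul_of_nonneg_right hlog hq.le
      rw [h2] at h3; exact h3
    have hlx : Real.log x * q = Real.log (2*q) * q + Real.log (x/(2*q)) * q := by
      rw [Real.log_div h.ne' h2q.ne']; ring
    rw [Real.rpow_def_of_pos h, Real.rpow_def_of_pos h2q, ← Real.exp_add]
    apply Real.exp_le_exp.2
    rw [hlx]; linarith

/-- Tail bounds imply moment bounds: there is an absolute constant `C > 0` such that whenever
`P(|X| ≥ a₀ + a₁√u + a₂u) ≤ e^{-u}` for all `u ≥ 1`, one has
`(E|X|^p)^{1/p} ≤ C(a₀ + a₁√p + a₂p)` for all `p ≥ 1`. -/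
theorem tail_to_moment :
    ∃ C : ℝ, 0 < C ∧
      ∀ (Ω : Type) (mΩ : MeasurableSpace Ω) (μ : Measure Ω), IsProbabilityMeasure μ →
        ∀ (X : Ω → ℝ) (a0 a1 a2 : ℝ), 0 ≤ a0 → 0 ≤ a1 → 0 ≤ a2 →
          (∀ u : ℝ, 1 ≤ u →
            μ {ω | a0 + a1 * Real.sqrt u + a2 * u ≤ |X ω|} ≤ ENNReal.ofReal (Real.exp (-u))) →
          ∀ p : ℝ, 1 ≤ p →
            (∫⁻ ω, ENNReal.ofReal (|X ω| ^ p) ∂μ) ^ (1 / p)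
              ≤ ENNReal.ofReal (C * (a0 + a1 * Real.sqrt p + a2 * p)) := by
  refine ⟨300, by norm_num, ?_⟩
  intro Ω mΩ μ hμ X a0 a1 a2 h0 h1 h2 htail p hp
  -- degenerate case: all coefficients zero is impossible
  by_cases hA : a0 + a1 + a2 ≤ 0
  · exfalso
    have e0 : a0 = 0 := le_antisymm (by linarith) h0
    have e1 : a1 = 0 := le_antisymm (by linarith) h1
    have e2 : a2 = 0 := le_antisymm (by linarith) h2
    have ht := htail 1 le_rfl
    have hset : {ω | a0 + a1 * Real.sqrt 1 + a2 * 1 ≤ |X ω|} = Set.univ := by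
      apply Set.eq_univ_iff_forall.2
      intro ω
      simp only [Set.mem_setOf_eq, e0, e1, e2]
      simp [abs_nonneg]
    rw [hset, measure_univ] at ht
    have hlt : ENNReal.ofReal (Real.exp (-1)) < 1 := by
      apply ENNReal.ofReal_lt_one.2
      have := Real.exp_lt_exp.2 (show (-1:ℝ) < 0 by norm_num)
      rwa [Real.exp_zero] at this
    exact absurd ht (not_le.2 hlt)
  push_neg at hA
  have hp0 : (0:ℝ) < p := lt_of_lt_of_le one_pos hp
  have hsp : (1:ℝ) ≤ Real.sqrt p := by
    rw [show (1:ℝ) = Real.sqrt 1 by simp]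
    exact Real.sqrt_le_sqrt hp
  set b : ℝ → ℝ := fun u => a0 + a1 * Real.sqrt u + a2 * u with hb
  set B : ℝ := a0 + a1 * Real.sqrt p + a2 * p with hB
  have hBpos : 0 < B := by nlinarith
  have hbmono : ∀ u v : ℝ, u ≤ v → b u ≤ b v := by
    intro u v huv
    have hs := Real.sqrt_le_sqrt huv
    simp only [hb]
    nlinarith
  have hbnn : ∀ u : ℝ, 0 ≤ u → 0 ≤ b u := by
    intro u hu
    simp only [hb]
    have := Real.sqrt_nonneg u
    nlinarith
  set S : ℕ → Set Ω := fun k => {ω | b ((k:ℝ)+1) ≤ |X ω|} with hS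
  set T : ℕ → Set Ω := fun k => toMeasurable μ (S k) with hT
  set c : ℕ → ENNReal := fun k => ENNReal.ofReal (b ((k:ℝ)+2) ^ p) with hc
  have hμS : ∀ k : ℕ, μ (S k) ≤ ENNReal.ofReal (Real.exp (-((k:ℝ)+1))) := by
    intro k
    exact htail ((k:ℝ)+1) (le_add_of_nonneg_left (Nat.cast_nonneg k))
  -- pointwise bound
  have hpt : ∀ ω, ENNReal.ofReal (|X ω| ^ p) ≤
      ENNReal.ofReal (b 2 ^ p) + ∑' k : ℕ, (T k).indicator (fun _ => c k) ω := by
    intro ω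
    by_cases hx : |X ω| ≤ b 2
    · refine le_trans ?_ le_self_add
      exact ENNReal.ofReal_le_ofReal (Real.rpow_le_rpow (abs_nonneg _) hx hp0.le)
    · push_neg at hx
      by_cases hex : ∃ k : ℕ, |X ω| ≤ b ((k:ℝ)+2)
      · set N := Nat.find hex with hN
        have hNle : |X ω| ≤ b ((N:ℝ)+2) := Nat.find_spec hex
        have hN0 : N ≠ 0 := by
          intro h
          rw [h] at hNle
          push_cast at hNle
          norm_num at hNle
          exact absurd hNle (not_le.2 hx)
        obtain ⟨m, hm⟩ := Nat.exists_eq_succ_of_ne_zero hN0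
        have hprev : ¬ |X ω| ≤ b ((m:ℝ)+2) := Nat.find_min hex (by omega)
        have hωS : ω ∈ S N := by
          show b ((N:ℝ)+1) ≤ |X ω|
          have hcast : ((N:ℝ)+1) = ((m:ℝ)+2) := by rw [hm]; push_cast; ring
          rw [hcast]
          exact (not_le.1 hprev).le
        have hωT : ω ∈ T N := subset_toMeasurable μ _ hωS
        refine le_trans ?_ le_add_self
        calc ENNReal.ofReal (|X ω| ^ p) ≤ c N :=
              ENNReal.ofReal_le_ofReal (Real.rpow_le_rpow (abs_nonneg _) hNle hp0.le)
          _ = (T N).indicator (fun _ => c N) ω := (Set.indicator_of_mem hωT (fun _ => c N)).symm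
          _ ≤ ∑' k, (T k).indicator (fun _ => c k) ω := ENNReal.le_tsum N
      · push_neg at hex
        have htop : (∑' k : ℕ, (T k).indicator (fun _ => c k) ω) = ⊤ := by
          have hall : ∀ k : ℕ, (T k).indicator (fun _ => c k) ω = c k := by
            intro k
            apply Set.indicator_of_mem
            apply subset_toMeasurable
            show b ((k:ℝ)+1) ≤ |X ω|
            exact (lt_of_le_of_lt (hbmono _ _ (by linarith)) (hex k)).le
          rw [tsum_congr hall]
          have hb1 : (0:ℝ) < b 1 := by
            simp only [hb, Real.sqrt_one]
            nlinarith
          refine eq_top_iff.2 ?_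
          have := ENNReal.tsum_const_eq_top_of_ne_zero
            (α := ℕ) (c := ENNReal.ofReal (b 1 ^ p)) (by
              simp only [ne_eq, ENNReal.ofReal_eq_zero, not_le]
              positivity)
          rw [← this]
          refine ENNReal.tsum_le_tsum fun k => ?_
          exact ENNReal.ofReal_le_ofReal
            (Real.rpow_le_rpow hb1.le (hbmono _ _ (by linarith [Nat.cast_nonneg (α := ℝ) k])) hp0.le)
        simp [htop]
  have hmeasT : ∀ k, MeasurableSet (T k) := fun k => measurableSet_toMeasurable μ _
  have hint : (∫⁻ ω, ENNReal.ofReal (|X ω| ^ p) ∂μ) ≤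
      ENNReal.ofReal (b 2 ^ p) + ∑' k : ℕ, c k * ENNReal.ofReal (Real.exp (-((k:ℝ)+1))) := by
    calc (∫⁻ ω, ENNReal.ofReal (|X ω| ^ p) ∂μ)
        ≤ ∫⁻ ω, (ENNReal.ofReal (b 2 ^ p) + ∑' k : ℕ, (T k).indicator (fun _ => c k) ω) ∂μ :=
          lintegral_mono hpt
      _ = ENNReal.ofReal (b 2 ^ p) * μ Set.univ
            + ∑' k : ℕ, ∫⁻ ω, (T k).indicator (fun _ => c k) ω ∂μ := by
          rw [lintegral_add_left measurable_const, lintegral_const,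
            lintegral_tsum (fun k => ((measurable_const.indicator (hmeasT k)).aemeasurable))]
      _ = ENNReal.ofReal (b 2 ^ p) + ∑' k : ℕ, c k * μ (S k) := by
          rw [measure_univ, mul_one]
          congr 1
          refine tsum_congr fun k => ?_
          rw [lintegral_indicator_const (hmeasT k), measure_toMeasurable]
      _ ≤ _ := by
          refine add_le_add_right (ENNReal.tsum_le_tsum fun k => ?_) _
          exact mul_le_mul_right (hμS k) _
  -- constants for the geometric bound
  set G : ℝ := a0 ^ p + a1 ^ p * p ^ (p/2) + a2 ^ p * (2*p) ^ p with hG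
  have hGnn : 0 ≤ G := by
    rw [hG]
    have := Real.rpow_nonneg h0 p
    have := mul_nonneg (Real.rpow_nonneg h1 p) (Real.rpow_nonneg hp0.le (p/2))
    have := mul_nonneg (Real.rpow_nonneg h2 p) (Real.rpow_nonneg (by linarith : (0:ℝ) ≤ 2*p) p)
    linarith
  set M : ℝ := 3 ^ p * G with hM
  have hMnn : 0 ≤ M := by
    rw [hM]
    exact mul_nonneg (Real.rpow_nonneg (by norm_num) p) hGnn
  set r : ℝ := Real.exp (-(1/2)) with hr
  have hr0 : 0 ≤ r := le_of_lt (by rw [hr]; exact Real.exp_pos _)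
  have hr1 : r < 1 := by
    rw [hr]
    have := Real.exp_lt_exp.2 (show -(1/2:ℝ) < 0 by norm_num)
    rwa [Real.exp_zero] at this
  -- per-term bound
  have hterm : ∀ k : ℕ, b ((k:ℝ)+2) ^ p * Real.exp (-((k:ℝ)+1)) ≤ M * r ^ k := by
    intro k
    set y : ℝ := (k:ℝ)+2 with hy
    have hy2 : (2:ℝ) ≤ y := by
      rw [hy]; linarith [Nat.cast_nonneg (α := ℝ) k]
    have hy0 : (0:ℝ) < y := by linarith
    have hm0 : 0 ≤ a1 * Real.sqrt y := mul_nonneg h1 (Real.sqrt_nonneg y)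
    have hm2 : 0 ≤ a2 * y := mul_nonneg h2 hy0.le
    set m : ℝ := max (max a0 (a1 * Real.sqrt y)) (a2*y) with hmdef
    have hma : a0 ≤ m := le_trans (le_max_left _ _) (le_max_left _ _)
    have hmb : a1 * Real.sqrt y ≤ m := le_trans (le_max_right _ _) (le_max_left _ _)
    have hmc : a2 * y ≤ m := le_max_right _ _
    have hmnn : 0 ≤ m := le_trans h0 hma
    have hby : b y ≤ 3 * m := by simp only [hb]; linarith
    have hstep1 : b y ^ p ≤ 3 ^ p * m ^ p := by
      rw [← Real.mul_rpow (by norm_num) hmnn]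
      exact Real.rpow_le_rpow (hbnn y hy0.le) hby hp0.le
    have hE : (1:ℝ) ≤ Real.exp (y/2) := Real.one_le_exp (by linarith)
    have hb0' : a0 ^ p ≤ a0 ^ p * Real.exp (y/2) :=
      le_mul_of_one_le_right (Real.rpow_nonneg h0 p) hE
    have hb1' : (a1 * Real.sqrt y) ^ p ≤ a1 ^ p * p ^ (p/2) * Real.exp (y/2) := by
      rw [Real.mul_rpow h1 (Real.sqrt_nonneg y)]
      have hsq : Real.sqrt y ^ p = y ^ (p/2) := by
        rw [Real.sqrt_eq_rpow, ← Real.rpow_mul hy0.le]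
        congr 1; ring
      rw [hsq, mul_assoc]
      refine mul_le_mul_of_nonneg_left ?_ (Real.rpow_nonneg h1 p)
      have haux := aux_rpow (q := p/2) (x := y) (by linarith) hy0.le
      rwa [show 2*(p/2) = p by ring] at haux
    have hb2' : (a2 * y) ^ p ≤ a2 ^ p * (2*p) ^ p * Real.exp (y/2) := by
      rw [Real.mul_rpow h2 hy0.le, mul_assoc]
      exact mul_le_mul_of_nonneg_left (aux_rpow hp0 hy0.le) (Real.rpow_nonneg h2 p)
    have hmp : m ^ p ≤ G * Real.exp (y/2) := by
      have hGE : G * Real.exp (y/2) = a0^p * Real.exp (y/2) + a1^p * p^(p/2) * Real.exp (y/2)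
          + a2^p*(2*p)^p*Real.exp (y/2) := by rw [hG]; ring
      have hmcase : m = a0 ∨ m = a1 * Real.sqrt y ∨ m = a2 * y := by
        rcases max_choice (max a0 (a1 * Real.sqrt y)) (a2*y) with h|h
        · rcases max_choice a0 (a1 * Real.sqrt y) with h'|h'
          · left; rw [hmdef, h, h']
          · right; left; rw [hmdef, h, h']
        · right; right; rw [hmdef, h]
      have n0 : 0 ≤ a0^p * Real.exp (y/2) :=
        mul_nonneg (Real.rpow_nonneg h0 p) (Real.exp_nonneg _)
      have n1 : 0 ≤ a1^p * p^(p/2) * Real.exp (y/2) :=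
        mul_nonneg (mul_nonneg (Real.rpow_nonneg h1 p) (Real.rpow_nonneg hp0.le _)) (Real.exp_nonneg _)
      have n2 : 0 ≤ a2^p*(2*p)^p*Real.exp (y/2) :=
        mul_nonneg (mul_nonneg (Real.rpow_nonneg h2 p) (Real.rpow_nonneg (by linarith) _)) (Real.exp_nonneg _)
      rcases hmcase with h|h|h <;> rw [h, hGE] <;> linarith
    calc b y ^ p * Real.exp (-((k:ℝ)+1))
        ≤ (3^p * (G * Real.exp (y/2))) * Real.exp (-((k:ℝ)+1)) := by
          refine mul_le_mul_of_nonneg_right ?_ (Real.exp_nonneg _)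
          calc b y ^ p ≤ 3^p * m^p := hstep1
            _ ≤ 3^p * (G * Real.exp (y/2)) :=
              mul_le_mul_of_nonneg_left hmp (Real.rpow_nonneg (by norm_num) p)
      _ = M * r ^ k := by
          rw [show (3:ℝ)^p * (G * Real.exp (y/2)) * Real.exp (-((k:ℝ)+1))
              = (3^p*G) * (Real.exp (y/2) * Real.exp (-((k:ℝ)+1))) by ring,
            ← Real.exp_add, hM, hr, ← Real.exp_nat_mul]
          congr 1
          rw [hy]; ring
  -- geometric sum bound
  have hsum : (∑' k : ℕ, c k * ENNReal.ofReal (Real.exp (-((k:ℝ)+1)))) ≤ ENNReal.ofReal (3 * M) := by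
    have hsummable : Summable (fun k : ℕ => M * r ^ k) :=
      (summable_geometric_of_lt_one hr0 hr1).mul_left M
    calc (∑' k : ℕ, c k * ENNReal.ofReal (Real.exp (-((k:ℝ)+1))))
        = ∑' k : ℕ, ENNReal.ofReal (b ((k:ℝ)+2) ^ p * Real.exp (-((k:ℝ)+1))) := by
          refine tsum_congr fun k => ?_
          rw [ENNReal.ofReal_mul (Real.rpow_nonneg (hbnn _ (by positivity)) p)]
      _ ≤ ∑' k : ℕ, ENNReal.ofReal (M * r ^ k) :=
          ENNReal.tsum_le_tsum fun k => ENNReal.ofReal_le_ofReal (hterm k)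
      _ = ENNReal.ofReal (∑' k : ℕ, M * r ^ k) :=
          (ENNReal.ofReal_tsum_of_nonneg (fun k => mul_nonneg hMnn (pow_nonneg hr0 k)) hsummable).symm
      _ ≤ ENNReal.ofReal (3 * M) := by
          apply ENNReal.ofReal_le_ofReal
          rw [tsum_mul_left, tsum_geometric_of_lt_one hr0 hr1]
          have hr23 : r ≤ 2/3 := by
            have h32 : (3/2:ℝ) ≤ Real.exp (1/2) := by
              have := Real.add_one_le_exp (1/2:ℝ); linarith
            have hmul : r * Real.exp (1/2) = 1 := by
              rw [hr, ← Real.exp_add]; norm_num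
            nlinarith [Real.exp_pos (1/2:ℝ)]
          have hpos : (0:ℝ) < 1 - r := by linarith
          have hinv : (1 - r)⁻¹ ≤ 3 := by
            nlinarith [inv_nonneg.2 hpos.le, inv_mul_cancel₀ hpos.ne']
          calc M * (1-r)⁻¹ ≤ M * 3 := mul_le_mul_of_nonneg_left hinv hMnn
            _ = 3 * M := mul_comm _ _
  -- final real arithmetic
  have hrp : ∀ {x y : ℝ}, 0 ≤ x → x ≤ y → x^p ≤ y^p :=
    fun hx hxy => Real.rpow_le_rpow hx hxy hp0.le
  have hspnn := Real.sqrt_nonneg p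
  have hsqp : Real.sqrt p ^ p = p ^ (p/2) := by
    rw [Real.sqrt_eq_rpow, ← Real.rpow_mul hp0.le]
    congr 1; ring
  have g0 : a0 ≤ B := by
    rw [hB]; nlinarith [mul_nonneg h1 hspnn, mul_nonneg h2 hp0.le]
  have g1 : a1 * Real.sqrt p ≤ B := by
    rw [hB]; nlinarith [mul_nonneg h2 hp0.le]
  have g2 : a2 * (2*p) ≤ 2*B := by
    rw [hB]; nlinarith [mul_nonneg h1 hspnn]
  have hs2 : Real.sqrt 2 ≤ 2 := by
    have h4 : Real.sqrt 4 = 2 := by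
      rw [show (4:ℝ) = 2^2 by norm_num, Real.sqrt_sq (by norm_num : (0:ℝ) ≤ 2)]
    have := Real.sqrt_le_sqrt (show (2:ℝ) ≤ 4 by norm_num)
    rwa [h4] at this
  have hb2B : b 2 ≤ 2*B := by
    simp only [hb, hB]
    have h1' : a1 * Real.sqrt 2 ≤ a1 * (2*Real.sqrt p) :=
      mul_le_mul_of_nonneg_left (by nlinarith) h1
    nlinarith [mul_nonneg h2 hp0.le]
  have hB2nn : (0:ℝ) ≤ 2*B := by linarith
  have t0 : a0^p ≤ (2*B)^p := hrp h0 (by linarith)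
  have e1 : a1^p * p^(p/2) = (a1 * Real.sqrt p)^p := by
    rw [Real.mul_rpow h1 (Real.sqrt_nonneg p), hsqp]
  have t1 : (a1*Real.sqrt p)^p ≤ (2*B)^p := hrp (mul_nonneg h1 hspnn) (by linarith)
  have e2 : a2^p * (2*p)^p = (a2*(2*p))^p := (Real.mul_rpow h2 (by linarith)).symm
  have t2 : (a2*(2*p))^p ≤ (2*B)^p := hrp (mul_nonneg h2 (by linarith)) g2
  have hG3 : G ≤ 3*(2*B)^p := by rw [hG, e1, e2]; linarith
  have h9 : (9:ℝ) ≤ 9^p := by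
    have := Real.rpow_le_rpow_of_exponent_le (show (1:ℝ) ≤ 9 by norm_num) hp
    rwa [Real.rpow_one] at this
  have h2p : (2:ℝ) ≤ 2^p := by
    have := Real.rpow_le_rpow_of_exponent_le (show (1:ℝ) ≤ 2 by norm_num) hp
    rwa [Real.rpow_one] at this
  have hM3 : 3*M ≤ (54*B)^p := by
    rw [hM]
    calc 3*(3^p*G) ≤ 3*(3^p*(3*(2*B)^p)) := by
          refine mul_le_mul_of_nonneg_left
            (mul_le_mul_of_nonneg_left hG3 (Real.rpow_nonneg (by norm_num) p)) (by norm_num)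
      _ = 9*(3^p*(2*B)^p) := by ring
      _ = 9*(6*B)^p := by
          rw [← Real.mul_rpow (show (0:ℝ) ≤ 3 by norm_num) hB2nn,
            show (3:ℝ)*(2*B) = 6*B by ring]
      _ ≤ 9^p*(6*B)^p := mul_le_mul_of_nonneg_right h9 (Real.rpow_nonneg (by linarith) p)
      _ = (54*B)^p := by
          rw [← Real.mul_rpow (show (0:ℝ) ≤ 9 by norm_num) (show (0:ℝ) ≤ 6*B by linarith),
            show (9:ℝ)*(6*B) = 54*B by ring]
  have hb2p : b 2 ^ p ≤ (54*B)^p := hrp (hbnn 2 (by norm_num)) (by linarith)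
  have hfinal_real : b 2 ^ p + 3*M ≤ (300*B)^p := by
    have h108 : 2*(54*B)^p ≤ (108*B)^p := by
      calc 2*(54*B)^p ≤ 2^p*(54*B)^p :=
            mul_le_mul_of_nonneg_right h2p (Real.rpow_nonneg (by linarith) p)
        _ = (108*B)^p := by
            rw [← Real.mul_rpow (show (0:ℝ) ≤ 2 by norm_num) (show (0:ℝ) ≤ 54*B by linarith),
              show (2:ℝ)*(54*B) = 108*B by ring]
    have h300 : (108*B)^p ≤ (300*B)^p := hrp (by linarith) (by linarith)
    linarith
  -- conclusion
  have hfin : (∫⁻ ω, ENNReal.ofReal (|X ω| ^ p) ∂μ) ≤ ENNReal.ofReal ((300*B)^p) := by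
    refine le_trans hint (le_trans (add_le_add_right hsum _) ?_)
    rw [← ENNReal.ofReal_add (Real.rpow_nonneg (hbnn 2 (by norm_num)) p)
      (show (0:ℝ) ≤ 3*M by linarith)]
    exact ENNReal.ofReal_le_ofReal hfinal_real
  calc (∫⁻ ω, ENNReal.ofReal (|X ω| ^ p) ∂μ) ^ (1/p)
      ≤ (ENNReal.ofReal ((300*B)^p)) ^ (1/p) :=
        ENNReal.rpow_le_rpow hfin (one_div_nonneg.2 hp0.le)
    _ = ENNReal.ofReal (((300*B)^p)^(1/p)) :=
        ENNReal.ofReal_rpow_of_nonneg (Real.rpow_nonneg (by linarith) p) (one_div_nonneg.2 hp0.le)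
    _ = ENNReal.ofReal (300*B) := by
        rw [← Real.rpow_mul (show (0:ℝ) ≤ 300*B by linarith), mul_one_div_cancel hp0.ne',
          Real.rpow_one]
end

section
/- Let ξ_1, …, ξ_n be independent real random variables. Then for all q > 1 and α ≥ 0: q^{αq} Σ_{i=1}^n E|ξ_i|^q ≤ 2(1 + q^α) max( q^{αq} E max_i |ξ_i|^q, (Σ_{i=1}^n E|ξ_i|)^q ). -/
open MeasureTheory

set_option maxHeartbeats 1000000 in
/-- For independent real random variables `ξ₁, …, ξₙ`, all `q > 1` and `α ≥ 0`:
`q^{αq} Σᵢ E|ξᵢ|^q ≤ 2(1 + q^α) max(q^{αq} E maxᵢ |ξᵢ|^q, (Σᵢ E|ξᵢ|)^q)`. -/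
theorem sum_moments_le_two_max {Ω : Type*} [MeasurableSpace Ω] (μ : Measure Ω)
    [IsProbabilityMeasure μ] (n : ℕ) (ξ : Fin n → Ω → ℝ)
    (hmeas : ∀ i, Measurable (ξ i))
    (hindep : ProbabilityTheory.iIndepFun ξ μ)
    (q α : ℝ) (hq : 1 < q) (hα : 0 ≤ α)
    (hintq : ∀ i, Integrable (fun ω => |ξ i ω| ^ q) μ)
    (hint1 : ∀ i, Integrable (fun ω => |ξ i ω|) μ)
    (hintmax : Integrable (fun ω => ⨆ i, |ξ i ω| ^ q) μ) :
    q ^ (α * q) * ∑ i, ∫ ω, |ξ i ω| ^ q ∂μ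
      ≤ 2 * (1 + q ^ α) *
        max (q ^ (α * q) * ∫ ω, (⨆ i, |ξ i ω| ^ q) ∂μ)
          ((∑ i, ∫ ω, |ξ i ω| ∂μ) ^ q) := by
  have hq0 : (0:ℝ) < q := lt_trans zero_lt_one hq
  have hq0' : q ≠ 0 := ne_of_gt hq0
  -- trivial case n = 0
  rcases Nat.eq_zero_or_pos n with hn | hn
  · subst hn
    simp [ciSup_of_empty, Real.sSup_empty, Real.zero_rpow hq0']
  haveI : Nonempty (Fin n) := Fin.pos_iff_nonempty.mp hn
  set M : ℝ := ∫ ω, (⨆ i, |ξ i ω| ^ q) ∂μ with hMdef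
  set S : ℝ := ∑ i, ∫ ω, |ξ i ω| ∂μ with hSdef
  set T : ℝ := ∑ i, ∫ ω, |ξ i ω| ^ q ∂μ with hTdef
  have hbdd : ∀ ω, BddAbove (Set.range fun i => |ξ i ω| ^ q) :=
    fun ω => (Set.finite_range _).bddAbove
  have hsup_nonneg : ∀ ω, 0 ≤ ⨆ i, |ξ i ω| ^ q := by
    intro ω
    obtain ⟨j⟩ := (inferInstance : Nonempty (Fin n))
    exact le_trans (Real.rpow_nonneg (abs_nonneg _) q) (le_ciSup (hbdd ω) j)
  have hle_sup : ∀ (i : Fin n) ω, |ξ i ω| ^ q ≤ ⨆ j, |ξ j ω| ^ q :=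
    fun i ω => le_ciSup (hbdd ω) i
  have hM0 : 0 ≤ M := integral_nonneg hsup_nonneg
  have hS0 : 0 ≤ S :=
    Finset.sum_nonneg fun i _ => integral_nonneg fun ω => abs_nonneg _
  have hT0 : 0 ≤ T :=
    Finset.sum_nonneg fun i _ => integral_nonneg fun ω => Real.rpow_nonneg (abs_nonneg _) q
  have hqα_pos : (0:ℝ) < q ^ α := Real.rpow_pos_of_pos hq0 α
  have hA_pos : (0:ℝ) < q ^ (α * q) := Real.rpow_pos_of_pos hq0 _
  have hX2 : S ^ q ≤ max (q ^ (α * q) * M) (S ^ q) := le_max_right _ _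
  have hX1 : q ^ (α * q) * M ≤ max (q ^ (α * q) * M) (S ^ q) := le_max_left _ _
  have hX0 : 0 ≤ max (q ^ (α * q) * M) (S ^ q) :=
    le_trans (Real.rpow_nonneg hS0 q) hX2
  -- degenerate case M = 0
  rcases eq_or_lt_of_le hM0 with hM | hM
  · have hTz : T = 0 := by
      have : ∀ i : Fin n, ∫ ω, |ξ i ω| ^ q ∂μ ≤ 0 := by
        intro i
        calc ∫ ω, |ξ i ω| ^ q ∂μ ≤ ∫ ω, (⨆ j, |ξ j ω| ^ q) ∂μ :=
              integral_mono (hintq i) hintmax (hle_sup i)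
          _ = 0 := hM.symm
      have h2 : ∀ i ∈ Finset.univ, ∫ ω, |ξ i ω| ^ q ∂μ = 0 := fun i _ =>
        le_antisymm (this i) (integral_nonneg fun ω => Real.rpow_nonneg (abs_nonneg _) q)
      exact Finset.sum_eq_zero h2
    rw [hTz, mul_zero]
    have : (0:ℝ) ≤ 2 * (1 + q ^ α) := by positivity
    positivity
  -- main case: 0 < M.  Threshold u = (2M)^(1/q).
  set u : ℝ := (2 * M) ^ (1/q) with hudef
  have h2M : (0:ℝ) < 2 * M := by linarith
  have hu : 0 < u := Real.rpow_pos_of_pos h2M _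
  have huq : u ^ q = 2 * M := by
    rw [hudef, ← Real.rpow_mul h2M.le, one_div_mul_cancel hq0', Real.rpow_one]
  -- Markov: μ{sup ≥ 2M} ≤ 1/2
  have hD : (μ {ω | 2 * M ≤ ⨆ i, |ξ i ω| ^ q}).toReal ≤ 1/2 := by
    have := mul_meas_ge_le_integral_of_nonneg
      (Filter.Eventually.of_forall hsup_nonneg) hintmax (2 * M)
    rw [← hMdef, measureReal_def] at this
    nlinarith [ENNReal.toReal_nonneg (a := μ {ω | 2 * M ≤ ⨆ i, |ξ i ω| ^ q})]
  -- the "all small" set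
  set C : Set Ω := {ω | ∀ j, |ξ j ω| ≤ u} with hCdef
  have hCmeas : MeasurableSet C := by
    have : C = ⋂ j, {ω | |ξ j ω| ≤ u} := by
      ext ω; simp [hCdef, Set.mem_iInter]
    rw [this]
    exact MeasurableSet.iInter fun j => measurableSet_le (hmeas j).abs measurable_const
  have hCsub : Cᶜ ⊆ {ω | 2 * M ≤ ⨆ i, |ξ i ω| ^ q} := by
    intro ω hω
    simp only [hCdef, Set.mem_compl_iff, Set.mem_setOf_eq, not_forall, not_le] at hω
    obtain ⟨j, hj⟩ := hω
    have : u ^ q ≤ |ξ j ω| ^ q := Real.rpow_le_rpow hu.le hj.le hq0.le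
    rw [huq] at this
    exact le_trans this (hle_sup j ω)
  have hC : 1/2 ≤ (μ C).toReal := by
    have h1 : (μ C).toReal + (μ Cᶜ).toReal = 1 := by
      rw [← ENNReal.toReal_add (measure_ne_top μ _) (measure_ne_top μ _),
        measure_add_measure_compl hCmeas, measure_univ, ENNReal.toReal_one]
    have h2 : (μ Cᶜ).toReal ≤ (μ {ω | 2 * M ≤ ⨆ i, |ξ i ω| ^ q}).toReal :=
      ENNReal.toReal_le_toReal (measure_ne_top μ _) (measure_ne_top μ _) |>.mpr
        (measure_mono hCsub)
    linarith
  -- sets B i and functions X i, Y i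
  set B : Fin n → Set Ω := fun i => {ω | ∀ j, j ≠ i → |ξ j ω| ≤ u} with hBdef
  have hBmeas : ∀ i, MeasurableSet (B i) := by
    intro i
    have : B i = ⋂ j, ⋂ (_ : j ≠ i), {ω | |ξ j ω| ≤ u} := by
      ext ω; simp [hBdef, Set.mem_iInter]
    rw [this]
    exact MeasurableSet.iInter fun j => MeasurableSet.iInter fun _ =>
      measurableSet_le (hmeas j).abs measurable_const
  have hB : ∀ i, 1/2 ≤ (μ (B i)).toReal := by
    intro i
    refine le_trans hC ?_
    refine ENNReal.toReal_le_toReal (measure_ne_top μ _) (measure_ne_top μ _) |>.mpr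
      (measure_mono ?_)
    intro ω hω j _
    exact hω j
  set X : Fin n → Ω → ℝ :=
    fun i => Set.indicator {ω | u < |ξ i ω|} (fun ω => |ξ i ω| ^ q) with hXdef
  set Y : Fin n → Ω → ℝ := fun i => Set.indicator (B i) (fun _ => (1:ℝ)) with hYdef
  have hXset : ∀ i, MeasurableSet {ω | u < |ξ i ω|} :=
    fun i => measurableSet_lt measurable_const (hmeas i).abs
  have hXint : ∀ i, Integrable (X i) μ := fun i => (hintq i).indicator (hXset i)
  have hXnonneg : ∀ i ω, 0 ≤ X i ω := fun i ω =>
    Set.indicator_nonneg (fun ω _ => Real.rpow_nonneg (abs_nonneg _) q) ω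
  have hXle : ∀ i ω, X i ω ≤ |ξ i ω| ^ q := fun i ω =>
    Set.indicator_le_self' (fun ω _ => Real.rpow_nonneg (abs_nonneg _) q) ω
  have hYint : ∀ i, Integrable (Y i) μ := by
    intro i
    exact (integrable_const (1:ℝ)).indicator (hBmeas i)
  have hYval : ∀ i, ∫ ω, Y i ω ∂μ = (μ (B i)).toReal := by
    intro i
    rw [hYdef]
    simp [integral_indicator_const (1:ℝ) (hBmeas i)]; rfl
  -- independence of X i and Y i
  have hXYindep : ∀ i, ProbabilityTheory.IndepFun (X i) (Y i) μ := by
    intro i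
    have hST : Disjoint ({i} : Finset (Fin n)) ({i}ᶜ : Finset (Fin n)) :=
      disjoint_compl_right
    have base := hindep.indepFun_finset {i} ({i}ᶜ) hST hmeas
    set φ : (({i} : Finset (Fin n)) → ℝ) → ℝ :=
      fun v => Set.indicator {x : ℝ | u < |x|} (fun x => |x| ^ q)
        (v ⟨i, Finset.mem_singleton_self i⟩) with hφdef
    set ψ : ((({i}ᶜ : Finset (Fin n)) : Type) → ℝ) → ℝ :=
      fun v => Set.indicator {v : (({i}ᶜ : Finset (Fin n)) : Type) → ℝ | ∀ j, |v j| ≤ u}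
        (fun _ => (1:ℝ)) v with hψdef
    have hgm : Measurable (fun x : ℝ => Set.indicator {x : ℝ | u < |x|} (fun x => |x| ^ q) x) :=
      Measurable.indicator (by fun_prop) (measurableSet_lt measurable_const measurable_abs)
    have hφm : Measurable φ := hgm.comp (measurable_pi_apply _)
    have hψm : Measurable ψ := by
      apply Measurable.indicator measurable_const
      have : {v : (({i}ᶜ : Finset (Fin n)) : Type) → ℝ | ∀ j, |v j| ≤ u}
          = ⋂ j, {v | |v j| ≤ u} := by ext v; simp [Set.mem_iInter]
      rw [this]
      exact MeasurableSet.iInter fun j =>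
        measurableSet_le (measurable_pi_apply j).abs measurable_const
    have hcomp := base.comp hφm hψm
    have hXeq : (φ ∘ fun a (j : ({i} : Finset (Fin n))) => ξ j a) = X i := by
      funext ω
      simp [hφdef, hXdef, Set.indicator_apply]
    have hYeq : (ψ ∘ fun a (j : ({i}ᶜ : Finset (Fin n))) => ξ j a) = Y i := by
      funext ω
      have hmem : ((fun (j : ({i}ᶜ : Finset (Fin n))) => ξ j ω) ∈
          {v : (({i}ᶜ : Finset (Fin n)) : Type) → ℝ | ∀ j, |v j| ≤ u}) ↔ ω ∈ B i := by
        constructor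
        · intro h j hj
          exact h ⟨j, Finset.mem_compl.mpr (by simpa using hj)⟩
        · intro h j
          exact h j (by simpa using Finset.mem_compl.mp j.2)
      simp only [hψdef, hYdef, Function.comp_apply, Set.indicator_apply]
      by_cases h : ω ∈ B i
      · rw [if_pos (hmem.mpr h), if_pos h]
      · rw [if_neg (fun hc => h (hmem.mp hc)), if_neg h]
    rw [hXeq, hYeq] at hcomp
    exact hcomp
  -- tail bound: ∑ ∫ X i ≤ 2 M
  have htail : ∑ i, ∫ ω, X i ω ∂μ ≤ 2 * M := by
    have hXY_int : ∀ i, Integrable (fun ω => X i ω * Y i ω) μ := by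
      intro i
      have heq : (fun ω => X i ω * Y i ω) = Set.indicator (B i) (X i) := by
        funext ω
        by_cases h : ω ∈ B i
        · simp [hYdef, Set.indicator_of_mem h]
        · simp [hYdef, Set.indicator_of_notMem h]
      rw [heq]
      exact (hXint i).indicator (hBmeas i)
    have hstep : ∀ i, ∫ ω, X i ω ∂μ ≤ 2 * ∫ ω, X i ω * Y i ω ∂μ := by
      intro i
      have hmul : ∫ ω, X i ω * Y i ω ∂μ = (∫ ω, X i ω ∂μ) * ∫ ω, Y i ω ∂μ :=
        (hXYindep i).integral_mul_eq_mul_integral (hXint i).aestronglyMeasurable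
          (hYint i).aestronglyMeasurable
      have hXnn : 0 ≤ ∫ ω, X i ω ∂μ := integral_nonneg (hXnonneg i)
      rw [hmul, hYval i]
      nlinarith [hB i]
    calc ∑ i, ∫ ω, X i ω ∂μ ≤ ∑ i, 2 * ∫ ω, X i ω * Y i ω ∂μ :=
          Finset.sum_le_sum fun i _ => hstep i
      _ = 2 * ∑ i, ∫ ω, X i ω * Y i ω ∂μ := by rw [Finset.mul_sum]
      _ = 2 * ∫ ω, (∑ i, X i ω * Y i ω) ∂μ := by
          rw [integral_finset_sum _ fun i _ => hXY_int i]
      _ ≤ 2 * M := by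
          have hpt : ∀ ω, (∑ i, X i ω * Y i ω) ≤ ⨆ j, |ξ j ω| ^ q := by
            intro ω
            by_cases hex : ∃ i₀, u < |ξ i₀ ω|
            · obtain ⟨i₀, hi₀⟩ := hex
              have hz : ∀ b ∈ Finset.univ, b ≠ i₀ → X b ω * Y b ω = 0 := by
                intro b _ hb
                have : ω ∉ B b := by
                  intro hωB
                  exact absurd (hωB i₀ (Ne.symm hb)) (not_le.mpr hi₀)
                simp [hYdef, Set.indicator_of_notMem this]
              rw [Finset.sum_eq_single_of_mem i₀ (Finset.mem_univ i₀) hz]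
              have hY1 : Y i₀ ω ≤ 1 := Set.indicator_le_self' (fun _ _ => zero_le_one) ω
              have hY0 : 0 ≤ Y i₀ ω := Set.indicator_nonneg (fun _ _ => zero_le_one) ω
              calc X i₀ ω * Y i₀ ω ≤ X i₀ ω * 1 :=
                    mul_le_mul_of_nonneg_left hY1 (hXnonneg i₀ ω)
                _ = X i₀ ω := mul_one _
                _ ≤ |ξ i₀ ω| ^ q := hXle i₀ ω
                _ ≤ ⨆ j, |ξ j ω| ^ q := hle_sup i₀ ω
            · push_neg at hex
              have : ∀ i, X i ω * Y i ω = 0 := by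
                intro i
                have : ω ∉ {ω | u < |ξ i ω|} := by
                  simp only [Set.mem_setOf_eq, not_lt]; exact hex i
                simp [hXdef, Set.indicator_of_notMem this]
              rw [Finset.sum_congr rfl fun i _ => this i, Finset.sum_const,
                smul_zero]
              exact hsup_nonneg ω
          have := integral_mono
            (integrable_finset_sum _ fun i _ => hXY_int i) hintmax hpt
          linarith
  -- head bound: T ≤ u^(q-1) S + ∑ ∫ X i
  have hhead : T ≤ u ^ (q - 1) * S + ∑ i, ∫ ω, X i ω ∂μ := by
    have hpt : ∀ (i : Fin n) ω, |ξ i ω| ^ q ≤ u ^ (q - 1) * |ξ i ω| + X i ω := by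
      intro i ω
      by_cases h : u < |ξ i ω|
      · have hX : X i ω = |ξ i ω| ^ q := by
          simp [hXdef, Set.indicator_apply, h]
        have : 0 ≤ u ^ (q - 1) * |ξ i ω| :=
          mul_nonneg (Real.rpow_nonneg hu.le _) (abs_nonneg _)
        linarith [hX.ge]
      · push_neg at h
        have hX : X i ω = 0 := by
          simp [hXdef, Set.indicator_apply, not_lt.mpr h]
        rw [hX, add_zero]
        rcases eq_or_lt_of_le (abs_nonneg (ξ i ω)) with h0 | h0
        · rw [← h0, Real.zero_rpow hq0', mul_zero]
        · have : |ξ i ω| ^ q = |ξ i ω| ^ (q - 1) * |ξ i ω| := by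
            rw [← Real.rpow_add_one (ne_of_gt h0) (q - 1), sub_add_cancel]
          rw [this]
          exact mul_le_mul_of_nonneg_right
            (Real.rpow_le_rpow (abs_nonneg _) h (by linarith)) (abs_nonneg _)
    have hint_i : ∀ i : Fin n, ∫ ω, |ξ i ω| ^ q ∂μ
        ≤ u ^ (q - 1) * (∫ ω, |ξ i ω| ∂μ) + ∫ ω, X i ω ∂μ := by
      intro i
      have h1 : ∫ ω, |ξ i ω| ^ q ∂μ ≤ ∫ ω, (u ^ (q - 1) * |ξ i ω| + X i ω) ∂μ :=
        integral_mono (hintq i) (((hint1 i).const_mul _).add (hXint i)) (hpt i)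
      rwa [integral_add ((hint1 i).const_mul _) (hXint i), integral_const_mul] at h1
    calc T ≤ ∑ i, (u ^ (q - 1) * (∫ ω, |ξ i ω| ∂μ) + ∫ ω, X i ω ∂μ) :=
          Finset.sum_le_sum fun i _ => hint_i i
      _ = u ^ (q - 1) * S + ∑ i, ∫ ω, X i ω ∂μ := by
          rw [Finset.sum_add_distrib, ← Finset.mul_sum]
  have hT : T ≤ u ^ (q - 1) * S + 2 * M := by linarith
  -- final algebra
  set W : ℝ := max (q ^ (α * q) * M) (S ^ q) with hWdef
  have hWpos : 0 < W := lt_of_lt_of_le (mul_pos hA_pos hM) hX1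
  have hc0 : (0:ℝ) ≤ 1 - 1/q := by
    have : 1/q ≤ 1 := by
      rw [div_le_one hq0]; exact hq.le
    linarith
  have hc1 : 1 - 1/q ≤ (1:ℝ) := by
    have : 0 < 1/q := by positivity
    linarith
  have hu_pow : u ^ (q - 1) = (2 * M) ^ (1 - 1/q) := by
    rw [hudef, ← Real.rpow_mul h2M.le]
    congr 1
    field_simp
  have hkey : q ^ (α * q) * (u ^ (q - 1) * S) ≤ 2 * q ^ α * W := by
    have hqsplit : q ^ (α * q) = q ^ α * (q ^ (α * q)) ^ (1 - 1/q) := by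
      rw [← Real.rpow_mul hq0.le, ← Real.rpow_add hq0]
      congr 1
      field_simp
      ring
    have hSle : S ≤ W ^ (1/q) := by
      have h1 : S = (S ^ q) ^ (1/q) := by
        rw [one_div, Real.rpow_rpow_inv hS0 hq0']
      rw [h1]
      exact Real.rpow_le_rpow (Real.rpow_nonneg hS0 q) hX2 (by positivity)
    have hprod : (q ^ (α * q)) ^ (1 - 1/q) * (2 * M) ^ (1 - 1/q)
        = (2 * (q ^ (α * q) * M)) ^ (1 - 1/q) := by
      rw [← Real.mul_rpow hA_pos.le h2M.le]
      congr 1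
      ring
    have hWle : (2 * (q ^ (α * q) * M)) ^ (1 - 1/q) ≤ (2 * W) ^ (1 - 1/q) :=
      Real.rpow_le_rpow (by positivity) (by linarith) hc0
    have h2W : (2 * W) ^ (1 - 1/q) = 2 ^ (1 - 1/q) * W ^ (1 - 1/q) :=
      Real.mul_rpow (by norm_num) hWpos.le
    have h2le : (2:ℝ) ^ (1 - 1/q) ≤ 2 := by
      calc (2:ℝ) ^ (1 - 1/q) ≤ 2 ^ (1:ℝ) :=
            Real.rpow_le_rpow_of_exponent_le one_le_two hc1
        _ = 2 := Real.rpow_one 2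
      -- done
    have hWW : W ^ (1 - 1/q) * W ^ (1/q) = W := by
      rw [← Real.rpow_add hWpos]
      simp
    calc q ^ (α * q) * (u ^ (q - 1) * S)
        = q ^ α * ((q ^ (α * q)) ^ (1 - 1/q) * (2 * M) ^ (1 - 1/q)) * S := by
          rw [hu_pow]; nth_rewrite 1 [hqsplit]; ring
      _ ≤ q ^ α * ((2 * W) ^ (1 - 1/q)) * (W ^ (1/q)) := by
          rw [hprod]
          have hnn1 : 0 ≤ q ^ α * (2 * (q ^ (α * q) * M)) ^ (1 - 1/q) := by positivity
          have := mul_le_mul (mul_le_mul_of_nonneg_left hWle hqα_pos.le) hSle hS0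
            (by positivity)
          simpa [mul_assoc] using this
      _ = q ^ α * 2 ^ (1 - 1/q) * (W ^ (1 - 1/q) * W ^ (1/q)) := by
          rw [h2W]; ring
      _ = q ^ α * 2 ^ (1 - 1/q) * W := by rw [hWW]
      _ ≤ 2 * q ^ α * W := by
          have : q ^ α * 2 ^ (1 - 1/q) ≤ q ^ α * 2 :=
            mul_le_mul_of_nonneg_left h2le hqα_pos.le
          nlinarith
  calc q ^ (α * q) * T ≤ q ^ (α * q) * (u ^ (q - 1) * S + 2 * M) :=
        mul_le_mul_of_nonneg_left hT hA_pos.le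
    _ = q ^ (α * q) * (u ^ (q - 1) * S) + 2 * (q ^ (α * q) * M) := by ring
    _ ≤ 2 * q ^ α * W + 2 * W := by
        have := hX1
        linarith [hkey]
    _ = 2 * (1 + q ^ α) * W := by ring
    _ = 2 * (1 + q ^ α) * max (q ^ (α * q) * M) (S ^ q) := rfl
end

section
/- With the setup of Example 1 (A_{i,j} = a_i a_j^T + a_j a_i^T for orthonormal a_1,…,a_n in ℝ^d, d ≥ n ≥ 2), form the block matrix G ∈ ℝ^{nd×nd} with (i,j)-block A_{i,j} for i ≠ j and zero diagonal blocks. Then G G^T = (n−2) a a^T + Diag(Σ_j a_j a_j^T, …, Σ_j a_j a_j^T), where a ∈ ℝ^{nd} is the vertical concatenation of a_1, …, a_n; consequently ‖G G^T‖ ≥ (n−2) n. -/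
open Matrix
open scoped Matrix.Norms.L2Operator

/-- `A_{i,j} = aᵢ aⱼᵀ + aⱼ aᵢᵀ` for orthonormal `a₁, …, aₙ` in `ℝ^d`. -/
def exA (n d : ℕ) (a : Fin n → Fin d → ℝ) (i j : Fin n) : Matrix (Fin d) (Fin d) ℝ :=
  Matrix.vecMulVec (a i) (a j) + Matrix.vecMulVec (a j) (a i)

/-- The block matrix `G` with `(i,j)`-block `A_{i,j}` off the diagonal and zero diagonal
blocks. -/
def exG (n d : ℕ) (a : Fin n → Fin d → ℝ) : Matrix (Fin n × Fin d) (Fin n × Fin d) ℝ :=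
  Matrix.of fun p q => if p.1 = q.1 then 0 else exA n d a p.1 q.1 p.2 q.2

lemma sum_ite_ne' {n : ℕ} (i : Fin n) (g : Fin n → ℝ) :
    ∑ k, (if i = k then 0 else g k) = (∑ k, g k) - g i := by
  have : ∀ k, (if i = k then (0:ℝ) else g k) = g k - (if i = k then g k else 0) := by
    intro k; split <;> simp_all
  simp only [this, Finset.sum_sub_distrib, Finset.sum_ite_eq, Finset.mem_univ, if_true]

/-- `G Gᵀ = (n-2) a aᵀ + Diag(Σⱼ aⱼ aⱼᵀ, …, Σⱼ aⱼ aⱼᵀ)` where `a` is the vertical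
concatenation of `a₁, …, aₙ`; consequently `‖G Gᵀ‖ ≥ (n-2)n`. -/
theorem example1_GGt (n d : ℕ) (hn : 2 ≤ n) (hnd : n ≤ d)
    (a : Fin n → (Fin d → ℝ))
    (horth : ∀ i j, a i ⬝ᵥ a j = if i = j then 1 else 0) :
    exG n d a * (exG n d a)ᵀ
        = ((n : ℝ) - 2) • Matrix.vecMulVec (fun p : Fin n × Fin d => a p.1 p.2)
            (fun p : Fin n × Fin d => a p.1 p.2)
          + Matrix.of (fun p q : Fin n × Fin d =>
              if p.1 = q.1 then (∑ m, Matrix.vecMulVec (a m) (a m)) p.2 q.2 else 0)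
      ∧ ((n : ℝ) - 2) * n ≤ ‖exG n d a * (exG n d a)ᵀ‖ := by
  have hE : exG n d a * (exG n d a)ᵀ
        = ((n : ℝ) - 2) • Matrix.vecMulVec (fun p : Fin n × Fin d => a p.1 p.2)
            (fun p : Fin n × Fin d => a p.1 p.2)
          + Matrix.of (fun p q : Fin n × Fin d =>
              if p.1 = q.1 then (∑ m, Matrix.vecMulVec (a m) (a m)) p.2 q.2 else 0) := by
    ext ⟨i, x⟩ ⟨j, y⟩
    have key : ∀ k : Fin n, ∑ z, (a i x * a k z + a k x * a i z) * (a j y * a k z + a k y * a j z)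
        = a i x * a j y * (a k ⬝ᵥ a k) + a i x * a k y * (a k ⬝ᵥ a j)
          + a k x * a j y * (a i ⬝ᵥ a k) + a k x * a k y * (a i ⬝ᵥ a j) := by
      intro k
      simp only [dotProduct, Finset.mul_sum]
      rw [← Finset.sum_add_distrib, ← Finset.sum_add_distrib, ← Finset.sum_add_distrib]
      exact Finset.sum_congr rfl fun z _ => by ring
    rw [Matrix.mul_apply]
    rw [Fintype.sum_prod_type]
    simp only [exG, exA, Matrix.transpose_apply, Matrix.of_apply, Matrix.add_apply,
      Matrix.vecMulVec_apply, Matrix.smul_apply, Matrix.sum_apply, smul_eq_mul]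
    have step : ∀ k : Fin n,
        (∑ z, (if i = k then (0:ℝ) else a i x * a k z + a k x * a i z) *
          (if j = k then 0 else a j y * a k z + a k y * a j z))
        = if i = k then 0 else if j = k then 0 else
            (a i x * a j y + if i = j then a k x * a k y else 0) := by
      intro k
      by_cases hik : i = k
      · simp [hik]
      by_cases hjk : j = k
      · simp [hjk, hik]
      simp only [if_neg hik, if_neg hjk]
      rw [key k, horth, horth, horth, horth, if_pos rfl,
        if_neg (fun h => hjk h.symm), if_neg hik]
      by_cases hij : i = j <;> simp [hij] <;> ring
    rw [Finset.sum_congr rfl fun k _ => step k]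
    by_cases hij : i = j
    · subst hij
      simp only [if_pos rfl, if_true]
      have : ∀ k : Fin n, (if i = k then (0:ℝ) else if i = k then 0 else
          (a i x * a i y + a k x * a k y))
          = if i = k then 0 else (a i x * a i y + a k x * a k y) := by
        intro k; split <;> rfl
      rw [Finset.sum_congr rfl fun k _ => this k, sum_ite_ne' i]
      simp only [Finset.sum_add_distrib, Finset.sum_const, Finset.card_univ, Fintype.card_fin,
        nsmul_eq_mul]
      ring
    · simp only [if_neg hij, add_zero]
      have h2 : ∀ k : Fin n, (if i = k then (0:ℝ) else if j = k then 0 else a i x * a j y)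
          = (if i = k then 0 else a i x * a j y) - (if j = k then a i x * a j y else 0) := by
        intro k
        by_cases hik : i = k
        · simp [hik, Ne.symm (hik ▸ hij)]
        by_cases hjk : j = k <;> simp [hik, hjk]
      rw [Finset.sum_congr rfl fun k _ => h2 k, Finset.sum_sub_distrib, sum_ite_ne' i,
        Finset.sum_ite_eq, if_pos (Finset.mem_univ j)]
      simp only [Finset.sum_const, Finset.card_univ, Fintype.card_fin, nsmul_eq_mul, add_zero]
      ring
  refine ⟨hE, ?_⟩
  set M := exG n d a * (exG n d a)ᵀ with hMdef
  set v : Fin n × Fin d → ℝ := fun p => a p.1 p.2 with hv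
  set c : ℝ := ((n : ℝ) - 2) * n + 1 with hc
  have hvv : v ⬝ᵥ v = n := by
    simp only [dotProduct, hv, Fintype.sum_prod_type]
    have : ∀ i : Fin n, ∑ x, a i x * a i x = 1 := by
      intro i; have := horth i i; simpa [dotProduct] using this
    simp [this]
  have hMv : M *ᵥ v = c • v := by
    funext p
    rw [hE, Matrix.add_mulVec, Matrix.smul_mulVec]
    simp only [Pi.add_apply, Pi.smul_apply, smul_eq_mul, Matrix.mulVec, dotProduct,
      Matrix.vecMulVec_apply, Matrix.of_apply, Matrix.sum_apply]
    have h1 : ∑ q : Fin n × Fin d, v p * v q * v q = v p * (n : ℝ) := by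
      have hs : (∑ q : Fin n × Fin d, v q * v q) = (n : ℝ) := by
        simpa only [dotProduct] using hvv
      simp only [mul_assoc, ← Finset.mul_sum, hs]
    have h2 : ∑ q : Fin n × Fin d,
        (if p.1 = q.1 then ∑ m, a m p.2 * a m q.2 else 0) * v q = v p := by
      rw [Fintype.sum_prod_type]
      have : ∀ k : Fin n, ∑ y : Fin d,
          (if p.1 = k then ∑ m, a m p.2 * a m y else 0) * v (k, y)
          = if p.1 = k then v p else 0 := by
        intro k
        by_cases hk : p.1 = k
        · simp only [if_pos hk]
          subst hk
          simp only [Finset.sum_mul]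
          rw [Finset.sum_comm]
          have : ∀ m : Fin n, ∑ y : Fin d, a m p.2 * a m y * v (p.1, y)
              = a m p.2 * (a m ⬝ᵥ a p.1) := by
            intro m
            simp only [dotProduct, Finset.mul_sum, hv, mul_assoc]
          rw [Finset.sum_congr rfl fun m _ => this m]
          simp only [horth]
          simp [hv]
        · simp [hk]
      rw [Finset.sum_congr rfl fun k _ => this k]
      simp
    rw [h1, h2]
    ring
  have hn0 : (0:ℝ) < n := by
    have : (2:ℝ) ≤ n := by exact_mod_cast hn
    linarith
  have hcge : ((n : ℝ) - 2) * n + 1 ≤ c := le_of_eq hc.symm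
  have hc0 : 0 ≤ c := by
    rw [hc]
    have : (2:ℝ) ≤ n := by exact_mod_cast hn
    nlinarith
  set x : EuclideanSpace ℝ (Fin n × Fin d) := (EuclideanSpace.equiv (Fin n × Fin d) ℝ).symm v
    with hx
  have hxnorm : ‖x‖ = Real.sqrt n := by
    rw [EuclideanSpace.norm_eq]
    congr 1
    have : ∑ i : Fin n × Fin d, ‖x i‖ ^ 2 = ∑ i : Fin n × Fin d, v i * v i := by
      apply Finset.sum_congr rfl
      intro i _
      rw [Real.norm_eq_abs, sq_abs, sq]
      rfl
    rw [this]
    simpa only [dotProduct] using hvv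
  have hxpos : 0 < ‖x‖ := by
    rw [hxnorm]
    exact Real.sqrt_pos.mpr hn0
  have key := M.l2_opNorm_mulVec x
  have hMx : (EuclideanSpace.equiv (Fin n × Fin d) ℝ).symm (M *ᵥ x) = c • x := by
    show (EuclideanSpace.equiv (Fin n × Fin d) ℝ).symm (M *ᵥ v) = c • x
    rw [hMv]
    rfl
  rw [hMx, norm_smul, Real.norm_eq_abs, abs_of_nonneg hc0] at key
  have hcM : c ≤ ‖M‖ := le_of_mul_le_mul_right key hxpos
  calc ((n : ℝ) - 2) * n ≤ c := by rw [hc]; linarith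
    _ ≤ ‖M‖ := hcM
end

section
/- Let n be even, d ≥ n ≥ 2, {a_1,…,a_d} an orthonormal basis of ℝ^d, and C = (c_{i,j}) an n×n orthogonal matrix with zero diagonal. Define A_{i,j} = c_{i,j}(a_i a_j^T + a_j a_i^T). Form G ∈ ℝ^{nd×nd} with (i,j)-block A_{i,j} (i≠j) and zero diagonal blocks. Then: ‖G G^T‖ = 1, ‖Σ_{i≠j} A_{i,j}²‖ = 2, and Σ_{i=1}^n ‖Σ_{j≠i} A_{i,j}²‖ = n. -/
open Matrix
open scoped Matrix.Norms.L2Operator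

section helpers
variable {n d : ℕ}

lemma ex2_sum_prod (a : Fin n → Fin d → ℝ)
    (horth : ∀ i j, a i ⬝ᵥ a j = if i = j then 1 else 0)
    (u v : Fin n → ℝ) :
    ∑ p, (∑ j, u j * a j p) * (∑ k, v k * a k p) = ∑ j, u j * v j := by
  have hd : ∀ x y : Fin n, ∑ z, a x z * a y z = if x = y then 1 else 0 := fun x y => horth x y
  have h1 : ∀ p : Fin d, (∑ j, u j * a j p) * (∑ k, v k * a k p)
      = ∑ j, ∑ k, (u j * v k) * (a j p * a k p) := by
    intro p
    rw [Finset.sum_mul_sum]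
    exact Finset.sum_congr rfl fun j _ => Finset.sum_congr rfl fun k _ => by ring
  simp_rw [h1]
  rw [Finset.sum_comm]
  refine Finset.sum_congr rfl fun j _ => ?_
  rw [Finset.sum_comm]
  have : ∀ k : Fin n, ∑ p, u j * v k * (a j p * a k p) = (u j * v k) * (if j = k then 1 else 0) := by
    intro k
    rw [← Finset.mul_sum, hd]
  simp_rw [this]
  simp [Finset.sum_ite_eq]

lemma ex2_sq_eq (a : Fin n → Fin d → ℝ)
    (horth : ∀ i j, a i ⬝ᵥ a j = if i = j then 1 else 0)
    (u : Fin n → ℝ) :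
    ∑ p, (∑ j, u j * a j p) ^ 2 = ∑ j, u j ^ 2 := by
  have := ex2_sum_prod a horth u u
  simpa [pow_two] using this

lemma ex2_bessel (a : Fin n → Fin d → ℝ)
    (horth : ∀ i j, a i ⬝ᵥ a j = if i = j then 1 else 0)
    (x : Fin d → ℝ) :
    ∑ j, (a j ⬝ᵥ x) ^ 2 ≤ ∑ p, x p ^ 2 := by
  set t : Fin n → ℝ := fun j => a j ⬝ᵥ x with ht
  have h0 : (0:ℝ) ≤ ∑ p, (x p - ∑ j, t j * a j p) ^ 2 :=
    Finset.sum_nonneg fun _ _ => sq_nonneg _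
  have hxs : ∑ p, x p * (∑ j, t j * a j p) = ∑ j, t j ^ 2 := by
    simp_rw [Finset.mul_sum]
    rw [Finset.sum_comm]
    refine Finset.sum_congr rfl fun j _ => ?_
    have h1 : ∑ p, x p * (t j * a j p) = t j * ∑ p, a j p * x p := by
      rw [Finset.mul_sum]
      exact Finset.sum_congr rfl fun p _ => by ring
    rw [h1]
    have h2 : ∑ p, a j p * x p = t j := rfl
    rw [h2, pow_two]
  have hss : ∑ p, (∑ j, t j * a j p) ^ 2 = ∑ j, t j ^ 2 := ex2_sq_eq a horth t
  have hexp : ∑ p, (x p - ∑ j, t j * a j p) ^ 2 = ∑ p, x p ^ 2 - ∑ j, t j ^ 2 := by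
    have h : ∀ p, (x p - ∑ j, t j * a j p) ^ 2
        = x p ^ 2 - 2 * (x p * (∑ j, t j * a j p)) + (∑ j, t j * a j p) ^ 2 := fun p => by ring
    simp_rw [h]
    rw [Finset.sum_add_distrib, Finset.sum_sub_distrib, ← Finset.mul_sum, hxs, hss]
    ring
  linarith

end helpers

lemma ex2_opNorm_eq {ι : Type*} [Fintype ι] [DecidableEq ι] (M : Matrix ι ι ℝ) (r : ℝ)
    (hr : 0 ≤ r)
    (hb : ∀ x : ι → ℝ, ∑ p, ((M *ᵥ x) p) ^ 2 ≤ r ^ 2 * ∑ p, (x p) ^ 2)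
    (v : ι → ℝ) (hv : ∑ p, (v p) ^ 2 = 1) (hMv : M *ᵥ v = r • v) :
    ‖M‖ = r := by
  have norm_eq : ∀ y : EuclideanSpace ℝ ι, ‖y‖ = Real.sqrt (∑ p, (y p) ^ 2) := by
    intro y
    rw [EuclideanSpace.norm_eq]
    congr 1
    exact Finset.sum_congr rfl fun p _ => by rw [Real.norm_eq_abs, sq_abs]
  have hle : ‖M‖ ≤ r := by
    rw [Matrix.l2_opNorm_def]
    refine ContinuousLinearMap.opNorm_le_bound _ hr fun x => ?_
    have hx : ((Matrix.toEuclideanLin.trans LinearMap.toContinuousLinearMap) M) x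
        = (WithLp.equiv 2 (ι → ℝ)).symm (M *ᵥ (WithLp.equiv 2 (ι → ℝ)) x) := rfl
    rw [hx, norm_eq, norm_eq]
    have h1 : ∑ p, (((WithLp.equiv 2 (ι → ℝ)).symm (M *ᵥ (WithLp.equiv 2 (ι → ℝ)) x)) p) ^ 2
        = ∑ p, ((M *ᵥ (WithLp.equiv 2 (ι → ℝ)) x) p) ^ 2 := rfl
    rw [h1]
    calc Real.sqrt (∑ p, ((M *ᵥ (WithLp.equiv 2 (ι → ℝ)) x) p) ^ 2)
        ≤ Real.sqrt (r ^ 2 * ∑ p, (((WithLp.equiv 2 (ι → ℝ)) x) p) ^ 2) :=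
          Real.sqrt_le_sqrt (hb _)
      _ = r * Real.sqrt (∑ p, (x p) ^ 2) := by
          rw [Real.sqrt_mul (sq_nonneg r), Real.sqrt_sq hr]; rfl
  have hge : r ≤ ‖M‖ := by
    have h2 := Matrix.l2_opNorm_mulVec M ((WithLp.equiv 2 (ι → ℝ)).symm v)
    have e2 : ‖((WithLp.equiv 2 (ι → ℝ)).symm v : EuclideanSpace ℝ ι)‖ = 1 := by
      rw [norm_eq]
      have h3 : ∑ p, (((WithLp.equiv 2 (ι → ℝ)).symm v : EuclideanSpace ℝ ι) p) ^ 2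
          = ∑ p, (v p) ^ 2 := rfl
      rw [h3, hv, Real.sqrt_one]
    have e1 : ‖(EuclideanSpace.equiv ι ℝ).symm (M *ᵥ ((WithLp.equiv 2 (ι → ℝ)).symm v))‖ = r := by
      rw [norm_eq]
      have h3 : ∀ p, ((EuclideanSpace.equiv ι ℝ).symm
          (M *ᵥ ((WithLp.equiv 2 (ι → ℝ)).symm v)) : EuclideanSpace ℝ ι) p = r * v p := by
        intro p
        show (M *ᵥ v) p = r * v p
        rw [hMv]; rfl
      simp_rw [h3, mul_pow, ← Finset.mul_sum, hv, mul_one, Real.sqrt_sq hr]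
    rw [e1, e2, mul_one] at h2
    exact h2
  linarith


/-- `A_{i,j} = c_{i,j}(aᵢ aⱼᵀ + aⱼ aᵢᵀ)`. -/
def ex2A (n d : ℕ) (c : Matrix (Fin n) (Fin n) ℝ) (a : Fin n → Fin d → ℝ) (i j : Fin n) :
    Matrix (Fin d) (Fin d) ℝ :=
  c i j • (Matrix.vecMulVec (a i) (a j) + Matrix.vecMulVec (a j) (a i))

/-- The block matrix `G` with `(i,j)`-block `A_{i,j}` off the diagonal and zero diagonal
blocks. -/
def ex2G (n d : ℕ) (c : Matrix (Fin n) (Fin n) ℝ) (a : Fin n → Fin d → ℝ) :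
    Matrix (Fin n × Fin d) (Fin n × Fin d) ℝ :=
  Matrix.of fun p q => if p.1 = q.1 then 0 else ex2A n d c a p.1 q.1 p.2 q.2

section entries
variable {n d : ℕ} (a : Fin n → Fin d → ℝ) (c : Matrix (Fin n) (Fin n) ℝ)

lemma ex2A_apply (i j : Fin n) (p q : Fin d) :
    ex2A n d c a i j p q = c i j * (a i p * a j q + a j p * a i q) := by
  simp [ex2A, Matrix.vecMulVec_apply, mul_comm]

lemma ex2G_apply (hcdiag : ∀ i, c i i = 0) (x y : Fin n) (r s : Fin d) :
    ex2G n d c a (x, r) (y, s) = ex2A n d c a x y r s := by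
  by_cases h : x = y
  · subst h; simp [ex2G, ex2A_apply, hcdiag]
  · simp [ex2G, h]

lemma ex2A_mul_apply (horth : ∀ i j, a i ⬝ᵥ a j = if i = j then 1 else 0)
    (hcdiag : ∀ i, c i i = 0) (i j k : Fin n) (p q : Fin d) :
    (ex2A n d c a i j * ex2A n d c a k j) p q
      = (c i j * c k j) * (a i p * a k q + (if i = k then a j p * a j q else 0)) := by
  by_cases hji : j = i
  · subst hji
    simp [Matrix.mul_apply, ex2A_apply, hcdiag]
  by_cases hjk : j = k
  · subst hjk
    simp [Matrix.mul_apply, ex2A_apply, hcdiag]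
  rw [Matrix.mul_apply]
  have hd : ∀ x y : Fin n, ∑ z, a x z * a y z = if x = y then 1 else 0 := fun x y => horth x y
  simp_rw [ex2A_apply]
  have expand : ∀ z, (c i j * (a i p * a j z + a j p * a i z))
        * (c k j * (a k z * a j q + a j z * a k q))
      = (c i j * c k j) * ((a i p * a j q) * (a j z * a k z) + (a i p * a k q) * (a j z * a j z)
        + (a j p * a j q) * (a i z * a k z) + (a j p * a k q) * (a i z * a j z)) := fun z => by ring
  simp_rw [expand, ← Finset.mul_sum]
  congr 1
  rw [Finset.sum_add_distrib, Finset.sum_add_distrib, Finset.sum_add_distrib,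
    ← Finset.mul_sum, ← Finset.mul_sum, ← Finset.mul_sum, ← Finset.mul_sum, hd, hd, hd, hd]
  rw [if_pos rfl, if_neg hjk, if_neg (fun h : i = j => hji h.symm)]
  by_cases hik : i = k
  · rw [if_pos hik, if_pos hik]; ring
  · rw [if_neg hik, if_neg hik]; ring

lemma ex2A_sq_apply (horth : ∀ i j, a i ⬝ᵥ a j = if i = j then 1 else 0)
    (hcdiag : ∀ i, c i i = 0) (i j : Fin n) (p q : Fin d) :
    ((ex2A n d c a i j) ^ 2) p q = c i j ^ 2 * (a i p * a i q + a j p * a j q) := by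
  rw [pow_two]
  rw [ex2A_mul_apply a c horth hcdiag i j i p q]
  rw [if_pos rfl]
  ring

end entries

/-- Example 2: with `C` orthogonal with zero diagonal and
`A_{i,j} = c_{i,j}(aᵢ aⱼᵀ + aⱼ aᵢᵀ)`, one has `‖G Gᵀ‖ = 1`, `‖Σ_{i≠j} A_{i,j}²‖ = 2`, and
`Σᵢ ‖Σ_{j≠i} A_{i,j}²‖ = n`. -/
theorem example2_norms (n d : ℕ) (hn : 2 ≤ n) (hnd : n ≤ d) (hne : Even n)
    (a : Fin n → (Fin d → ℝ))
    (horth : ∀ i j, a i ⬝ᵥ a j = if i = j then 1 else 0)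
    (c : Matrix (Fin n) (Fin n) ℝ) (hc : c * cᵀ = 1) (hcdiag : ∀ i, c i i = 0) :
    ‖ex2G n d c a * (ex2G n d c a)ᵀ‖ = 1
      ∧ ‖∑ p ∈ Finset.univ.offDiag, (ex2A n d c a p.1 p.2) ^ 2‖ = 2
      ∧ ∑ i, ‖∑ j ∈ Finset.univ.erase i, (ex2A n d c a i j) ^ 2‖ = (n : ℝ) := by
  -- basic facts about c
  have hrow : ∀ i k, ∑ j, c i j * c k j = if i = k then 1 else 0 := by
    intro i k
    have h := congrFun (congrFun hc i) k
    simpa [Matrix.mul_apply, Matrix.one_apply] using h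
  have hc' : cᵀ * c = 1 := mul_eq_one_comm.mp hc
  have hcol : ∀ i k, ∑ j, c j i * c j k = if i = k then 1 else 0 := by
    intro i k
    have h := congrFun (congrFun hc' i) k
    simpa [Matrix.mul_apply, Matrix.one_apply] using h
  have hrowsq : ∀ i, ∑ j, c i j ^ 2 = 1 := by
    intro i
    have := hrow i i
    simpa [pow_two] using this
  have hcolsq : ∀ j, ∑ i, c i j ^ 2 = 1 := by
    intro j
    have := hcol j j
    simpa [pow_two] using this
  have hsqle : ∀ i j, c i j ^ 2 ≤ 1 := by
    intro i j
    have h1 := hrowsq i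
    have h2 : c i j ^ 2 ≤ ∑ k, c i k ^ 2 :=
      Finset.single_le_sum (f := fun k => c i k ^ 2) (fun k _ => sq_nonneg _) (Finset.mem_univ j)
    linarith
  set W : Fin n → Fin n → ℝ := fun i j => if j = i then 1 else c i j ^ 2 with hW
  have hW0 : ∀ i j, 0 ≤ W i j := by
    intro i j
    by_cases h : j = i <;> simp [hW, h, sq_nonneg]
  have hW1 : ∀ i j, W i j ≤ 1 := by
    intro i j
    by_cases h : j = i <;> simp [hW, h, hsqle]
  have hWii : ∀ i, W i i = 1 := fun i => by simp [hW]
  -- key rearrangement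
  have key1 : ∀ (i : Fin n) (p q : Fin d),
      ∑ j, c i j ^ 2 * (a i p * a i q + a j p * a j q) = ∑ j, W i j * (a j p * a j q) := by
    intro i p q
    have h1 : ∀ j, c i j ^ 2 * (a i p * a i q + a j p * a j q)
        = c i j ^ 2 * (a i p * a i q) + c i j ^ 2 * (a j p * a j q) := fun j => by ring
    have h2 : ∀ j, W i j * (a j p * a j q)
        = c i j ^ 2 * (a j p * a j q) + (if j = i then a i p * a i q else 0) := by
      intro j
      by_cases h : j = i
      · subst h; simp [hW, hcdiag]
      · simp [hW, h]
    simp_rw [h1, h2]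
    rw [Finset.sum_add_distrib, Finset.sum_add_distrib, ← Finset.sum_mul, hrowsq,
      Finset.sum_ite_eq' Finset.univ i (fun _ => a i p * a i q)]
    simp
    ring
  -- entries of the erase sums
  have hS : ∀ (i : Fin n) (p q : Fin d),
      (∑ j ∈ Finset.univ.erase i, (ex2A n d c a i j) ^ 2) p q
        = ∑ j, W i j * (a j p * a j q) := by
    intro i p q
    have hAii : ex2A n d c a i i = 0 := by
      ext p q
      simp [ex2A_apply, hcdiag]
    have hfull : ∑ j ∈ Finset.univ.erase i, (ex2A n d c a i j) ^ 2
        = ∑ j, (ex2A n d c a i j) ^ 2 := by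
      apply Finset.sum_erase
      rw [hAii]
      exact zero_pow two_ne_zero
    rw [hfull, Matrix.sum_apply]
    simp_rw [ex2A_sq_apply a c horth hcdiag]
    exact key1 i p q
  -- entries of the offDiag sum
  have hT : ∀ (p q : Fin d),
      (∑ x ∈ Finset.univ.offDiag, (ex2A n d c a x.1 x.2) ^ 2) p q
        = ∑ j, 2 * (a j p * a j q) := by
    intro p q
    have hfull : ∑ x ∈ Finset.univ.offDiag, (ex2A n d c a x.1 x.2) ^ 2
        = ∑ x : Fin n × Fin n, (ex2A n d c a x.1 x.2) ^ 2 := by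
      apply Finset.sum_subset (Finset.subset_univ _)
      intro x _ hx
      have hxx : x.1 = x.2 := by
        by_contra h
        exact hx (Finset.mem_offDiag.mpr ⟨Finset.mem_univ _, Finset.mem_univ _, h⟩)
      have hAzero : ex2A n d c a x.1 x.2 = 0 := by
        ext p q
        rw [ex2A_apply, ← hxx, hcdiag]
        simp
      rw [hAzero]
      exact zero_pow two_ne_zero
    rw [hfull, Matrix.sum_apply]
    rw [Fintype.sum_prod_type]
    simp_rw [ex2A_sq_apply a c horth hcdiag]
    calc ∑ i, ∑ j, c i j ^ 2 * (a i p * a i q + a j p * a j q)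
        = ∑ i, ∑ j, (c i j ^ 2 * (a i p * a i q) + c i j ^ 2 * (a j p * a j q)) :=
          Finset.sum_congr rfl fun i _ => Finset.sum_congr rfl fun j _ => by ring
      _ = ∑ i, (∑ j, c i j ^ 2 * (a i p * a i q)) + ∑ i, ∑ j, c i j ^ 2 * (a j p * a j q) := by
          rw [← Finset.sum_add_distrib]
          exact Finset.sum_congr rfl fun i _ => Finset.sum_add_distrib
      _ = ∑ i, (a i p * a i q) + ∑ j, (a j p * a j q) := by
          congr 1
          · refine Finset.sum_congr rfl fun i _ => ?_
            rw [← Finset.sum_mul, hrowsq, one_mul]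
          · rw [Finset.sum_comm]
            refine Finset.sum_congr rfl fun j _ => ?_
            rw [← Finset.sum_mul, hcolsq, one_mul]
      _ = ∑ j, 2 * (a j p * a j q) := by
          rw [← Finset.sum_add_distrib]
          exact Finset.sum_congr rfl fun j _ => by ring
  -- entries of G * Gᵀ
  have hGG : ∀ (i k : Fin n) (p q : Fin d),
      (ex2G n d c a * (ex2G n d c a)ᵀ) (i, p) (k, q)
        = if i = k then ∑ j, W i j * (a j p * a j q) else 0 := by
    intro i k p q
    rw [Matrix.mul_apply, Fintype.sum_prod_type]
    have h1 : ∀ (j : Fin n) (z : Fin d),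
        ex2G n d c a (i, p) (j, z) * (ex2G n d c a)ᵀ (j, z) (k, q)
          = ex2A n d c a i j p z * ex2A n d c a k j q z := by
      intro j z
      rw [Matrix.transpose_apply, ex2G_apply a c hcdiag, ex2G_apply a c hcdiag]
    simp_rw [h1]
    have hsym : ∀ (x y : Fin n) (r s : Fin d), ex2A n d c a x y r s = ex2A n d c a x y s r := by
      intro x y r s
      rw [ex2A_apply, ex2A_apply]
      ring
    have h2 : ∀ j, ∑ z, ex2A n d c a i j p z * ex2A n d c a k j q z
        = (c i j * c k j) * (a i p * a k q + (if i = k then a j p * a j q else 0)) := by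
      intro j
      have h3 : ∑ z, ex2A n d c a i j p z * ex2A n d c a k j q z
          = (ex2A n d c a i j * ex2A n d c a k j) p q := by
        rw [Matrix.mul_apply]
        exact Finset.sum_congr rfl fun z _ => by rw [hsym k j q z]
      rw [h3, ex2A_mul_apply a c horth hcdiag]
    simp_rw [h2]
    by_cases hik : i = k
    · subst hik
      simp only [eq_self_iff_true, if_true]
      have h4 : ∀ j, c i j * c i j * (a i p * a i q + a j p * a j q)
          = c i j ^ 2 * (a i p * a i q + a j p * a j q) := fun j => by ring
      simp_rw [h4]
      exact key1 i p q
    · rw [if_neg hik]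
      simp_rw [if_neg hik, add_zero]
      have h5 : ∀ j, c i j * c k j * (a i p * a k q) = (c i j * c k j) * (a i p * a k q) :=
        fun j => rfl
      rw [← Finset.sum_mul, hrow, if_neg hik, zero_mul]
  -- mulVec of weighted matrices
  have hmv : ∀ (w : Fin n → ℝ) (x : Fin d → ℝ) (p : Fin d),
      ∑ q, (∑ j, w j * (a j p * a j q)) * x q = ∑ j, (w j * (a j ⬝ᵥ x)) * a j p := by
    intro w x p
    have h1 : ∀ q, (∑ j, w j * (a j p * a j q)) * x q
        = ∑ j, (w j * a j p) * (a j q * x q) := by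
      intro q
      rw [Finset.sum_mul]
      exact Finset.sum_congr rfl fun j _ => by ring
    simp_rw [h1]
    rw [Finset.sum_comm]
    refine Finset.sum_congr rfl fun j _ => ?_
    rw [← Finset.mul_sum]
    have h2 : ∑ q, a j q * x q = a j ⬝ᵥ x := rfl
    rw [h2]
    ring
  have hai : ∀ i, ∑ p, (a i p) ^ 2 = 1 := by
    intro i
    have := horth i i
    rw [if_pos rfl] at this
    simpa [pow_two, dotProduct] using this
  -- norm of a weighted matrix with weights in [0,1] and one weight equal to 1
  have hnorm1 : ∀ w : Fin n → ℝ, (∀ j, 0 ≤ w j) → (∀ j, w j ≤ 1) → ∀ i : Fin n, w i = 1 →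
      ‖(Matrix.of fun p q : Fin d => ∑ j, w j * (a j p * a j q))‖ = 1 := by
    intro w hw0 hw1 i hwi
    have hmvap : ∀ (x : Fin d → ℝ) (p : Fin d),
        ((Matrix.of fun p q : Fin d => ∑ j, w j * (a j p * a j q)) *ᵥ x) p
          = ∑ j, (w j * (a j ⬝ᵥ x)) * a j p := by
      intro x p
      show ∑ q, (∑ j, w j * (a j p * a j q)) * x q = _
      exact hmv w x p
    apply ex2_opNorm_eq _ 1 zero_le_one
    · intro x
      have h1 : ∑ p, (((Matrix.of fun p q : Fin d => ∑ j, w j * (a j p * a j q)) *ᵥ x) p) ^ 2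
          = ∑ j, (w j * (a j ⬝ᵥ x)) ^ 2 := by
        simp_rw [hmvap]
        exact ex2_sq_eq a horth _
      rw [h1, one_pow, one_mul]
      calc ∑ j, (w j * (a j ⬝ᵥ x)) ^ 2 ≤ ∑ j, (a j ⬝ᵥ x) ^ 2 := by
            refine Finset.sum_le_sum fun j _ => ?_
            rw [mul_pow]
            have hww : w j ^ 2 ≤ 1 := by nlinarith [hw0 j, hw1 j]
            calc w j ^ 2 * (a j ⬝ᵥ x) ^ 2 ≤ 1 * (a j ⬝ᵥ x) ^ 2 :=
                  mul_le_mul_of_nonneg_right hww (sq_nonneg _)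
              _ = (a j ⬝ᵥ x) ^ 2 := one_mul _
        _ ≤ ∑ p, x p ^ 2 := ex2_bessel a horth x
    · exact hai i
    · funext p
      rw [hmvap]
      have h2 : ∀ j, (w j * (a j ⬝ᵥ a i)) * a j p
          = if j = i then w j * a j p else 0 := by
        intro j
        rw [horth j i]
        by_cases h : j = i <;> simp [h]
      simp_rw [h2]
      rw [Finset.sum_ite_eq' Finset.univ i (fun j => w j * a j p)]
      simp [hwi]
  refine ⟨?_, ?_, ?_⟩
  · -- ‖G Gᵀ‖ = 1
    have i0 : Fin n := ⟨0, by omega⟩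
    have hGmv : ∀ (v : Fin n × Fin d → ℝ) (i : Fin n) (p : Fin d),
        ((ex2G n d c a * (ex2G n d c a)ᵀ) *ᵥ v) (i, p)
          = ∑ j, (W i j * (a j ⬝ᵥ fun q => v (i, q))) * a j p := by
      intro v i p
      show ∑ x : Fin n × Fin d, (ex2G n d c a * (ex2G n d c a)ᵀ) (i, p) x * v x = _
      rw [Fintype.sum_prod_type]
      simp_rw [hGG]
      have h1 : ∀ k : Fin n, ∑ q, (if i = k then ∑ j, W i j * (a j p * a j q) else 0) * v (k, q)
          = if i = k then ∑ q, (∑ j, W i j * (a j p * a j q)) * v (k, q) else 0 := by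
        intro k
        by_cases h : i = k <;> simp [h]
      simp_rw [h1]
      rw [Finset.sum_ite_eq Finset.univ i
        (fun k => ∑ q, (∑ j, W i j * (a j p * a j q)) * v (k, q))]
      rw [if_pos (Finset.mem_univ i)]
      exact hmv (W i) (fun q => v (i, q)) p
    refine ex2_opNorm_eq _ 1 zero_le_one ?_
      (fun y : Fin n × Fin d => if y.1 = i0 then a i0 y.2 else 0) ?_ ?_
    · intro v
      rw [one_pow, one_mul, Fintype.sum_prod_type, Fintype.sum_prod_type]
      refine Finset.sum_le_sum fun i _ => ?_
      have h1 : ∑ p, (((ex2G n d c a * (ex2G n d c a)ᵀ) *ᵥ v) (i, p)) ^ 2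
          = ∑ j, (W i j * (a j ⬝ᵥ fun q => v (i, q))) ^ 2 := by
        simp_rw [hGmv]
        exact ex2_sq_eq a horth _
      rw [h1]
      calc ∑ j, (W i j * (a j ⬝ᵥ fun q => v (i, q))) ^ 2
          ≤ ∑ j, (a j ⬝ᵥ fun q => v (i, q)) ^ 2 := by
            refine Finset.sum_le_sum fun j _ => ?_
            rw [mul_pow]
            have hww : W i j ^ 2 ≤ 1 := by nlinarith [hW0 i j, hW1 i j]
            calc W i j ^ 2 * (a j ⬝ᵥ fun q => v (i, q)) ^ 2
                ≤ 1 * (a j ⬝ᵥ fun q => v (i, q)) ^ 2 :=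
                  mul_le_mul_of_nonneg_right hww (sq_nonneg _)
              _ = (a j ⬝ᵥ fun q => v (i, q)) ^ 2 := one_mul _
        _ ≤ ∑ q, v (i, q) ^ 2 := ex2_bessel a horth _
    · rw [Fintype.sum_prod_type]
      have h : ∀ k : Fin n, ∑ q, (if k = i0 then a i0 q else 0) ^ 2
          = if k = i0 then 1 else 0 := by
        intro k
        by_cases h : k = i0 <;> simp [h, hai i0]
      simp_rw [h]
      rw [Finset.sum_ite_eq' Finset.univ i0 (fun _ => (1:ℝ))]
      simp
    · funext x
      obtain ⟨i, p⟩ := x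
      rw [hGmv]
      simp only [Pi.smul_apply, smul_eq_mul, one_mul]
      by_cases h : i = i0
      · rw [h]
        simp only [eq_self_iff_true, if_true]
        have h2 : ∀ j, (W i0 j * (a j ⬝ᵥ a i0)) * a j p
            = if j = i0 then W i0 j * a j p else 0 := by
          intro j
          rw [horth j i0]
          by_cases hj : j = i0 <;> simp [hj]
        simp_rw [h2]
        rw [Finset.sum_ite_eq' Finset.univ i0 (fun j => W i0 j * a j p)]
        simp [hWii]
      · simp only [if_neg h]
        have h3 : ∀ j, (W i j * (a j ⬝ᵥ fun _ : Fin d => (0:ℝ))) * a j p = 0 := by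
          intro j
          simp [dotProduct]
        simp_rw [h3]
        simp
  · -- offDiag
    have i0 : Fin n := ⟨0, by omega⟩
    have hTm : (∑ x ∈ Finset.univ.offDiag, (ex2A n d c a x.1 x.2) ^ 2)
        = Matrix.of fun p q : Fin d => ∑ j, (fun _ => (2:ℝ)) j * (a j p * a j q) := by
      ext p q
      exact hT p q
    rw [hTm]
    have hmvap : ∀ (x : Fin d → ℝ) (p : Fin d),
        ((Matrix.of fun p q : Fin d => ∑ j, (fun _ => (2:ℝ)) j * (a j p * a j q)) *ᵥ x) p
          = ∑ j, ((2:ℝ) * (a j ⬝ᵥ x)) * a j p := by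
      intro x p
      show ∑ q, (∑ j, (2:ℝ) * (a j p * a j q)) * x q = _
      exact hmv (fun _ => 2) x p
    apply ex2_opNorm_eq _ 2 (by norm_num)
    · intro x
      have h1 : ∑ p, (((Matrix.of fun p q : Fin d =>
            ∑ j, (fun _ => (2:ℝ)) j * (a j p * a j q)) *ᵥ x) p) ^ 2
          = ∑ j, ((2:ℝ) * (a j ⬝ᵥ x)) ^ 2 := by
        simp_rw [hmvap]
        exact ex2_sq_eq a horth _
      rw [h1]
      have h2 : ∀ j, ((2:ℝ) * (a j ⬝ᵥ x)) ^ 2 = 2 ^ 2 * (a j ⬝ᵥ x) ^ 2 := fun j => by ring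
      simp_rw [h2]
      rw [← Finset.mul_sum]
      have := ex2_bessel a horth x
      nlinarith
    · exact hai i0
    · funext p
      rw [hmvap]
      have h2 : ∀ j, ((2:ℝ) * (a j ⬝ᵥ a i0)) * a j p
          = if j = i0 then 2 * a j p else 0 := by
        intro j
        rw [horth j i0]
        by_cases h : j = i0 <;> simp [h]
      simp_rw [h2]
      rw [Finset.sum_ite_eq' Finset.univ i0 (fun j => 2 * a j p)]
      simp
  · -- erase sums
    have hcard : (Finset.univ : Finset (Fin n)).card = n := Finset.card_univ.trans (Fintype.card_fin n)
    have hone : ∀ i : Fin n, ‖∑ j ∈ Finset.univ.erase i, (ex2A n d c a i j) ^ 2‖ = 1 := by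
      intro i
      have hSm : (∑ j ∈ Finset.univ.erase i, (ex2A n d c a i j) ^ 2)
          = Matrix.of fun p q : Fin d => ∑ j, W i j * (a j p * a j q) := by
        ext p q
        exact hS i p q
      rw [hSm]
      exact hnorm1 (W i) (hW0 i) (hW1 i) i (hWii i)
    simp_rw [hone]
    rw [Finset.sum_const, hcard]
    simp
end

section
/- Let G ∈ ℍ^{nd} be a Hermitian block matrix with (i,j)-blocks A_{i,j} ∈ ℍ^d for i ≠ j and zero diagonal blocks, where A_{j,i} = A_{i,j}. Then ‖G G*‖ ≤ Σ_{i=1}^n ‖Σ_{j: j≠i} A_{i,j}²‖. -/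
open Matrix
open scoped Matrix.Norms.L2Operator

/-- For a Hermitian block matrix `G` with blocks `A_{i,j} ∈ ℍ^d` (`i ≠ j`) and zero diagonal
blocks, where `A_{j,i} = A_{i,j}`, one has `‖G Gᴴ‖ ≤ Σᵢ ‖Σ_{j≠i} A_{i,j}²‖`. -/
theorem block_GGstar_norm_le (n d : ℕ) (A : Fin n → Fin n → Matrix (Fin d) (Fin d) ℂ)
    (hHerm : ∀ i j, (A i j).IsHermitian) (hsymm : ∀ i j, A j i = A i j) :
    ‖(Matrix.of fun p q : Fin n × Fin d =>
          if p.1 = q.1 then 0 else A p.1 q.1 p.2 q.2) *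
        (Matrix.of fun p q : Fin n × Fin d =>
          if p.1 = q.1 then 0 else A p.1 q.1 p.2 q.2)ᴴ‖
      ≤ ∑ i, ‖∑ j ∈ Finset.univ.erase i, (A i j) ^ 2‖ := by
  set G : Matrix (Fin n × Fin d) (Fin n × Fin d) ℂ :=
    Matrix.of fun p q : Fin n × Fin d =>
      if p.1 = q.1 then 0 else A p.1 q.1 p.2 q.2 with hG
  -- block columns
  set C : Fin n → Matrix (Fin n × Fin d) (Fin d) ℂ :=
    fun k => Matrix.of fun p q => G p (k, q) with hC
  have hdecomp : G * Gᴴ = ∑ k, C k * (C k)ᴴ := by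
    ext p q
    simp only [Matrix.mul_apply, Matrix.sum_apply, Matrix.conjTranspose_apply]
    rw [Fintype.sum_prod_type]
    rfl
  have hCol : ∀ k, (C k)ᴴ * C k = ∑ j ∈ Finset.univ.erase k, (A k j) ^ 2 := by
    intro k
    ext p q
    simp only [Matrix.mul_apply, Matrix.sum_apply, Matrix.conjTranspose_apply, hC, hG,
      Matrix.of_apply]
    rw [Fintype.sum_prod_type]
    have step1 : ∀ i : Fin n,
        (∑ r, star (if i = k then (0:ℂ) else A i k r p) * (if i = k then 0 else A i k r q))
          = if i = k then 0 else ((A k i) ^ 2) p q := by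
      intro i
      by_cases hik : i = k
      · simp [hik]
      · rw [if_neg hik]
        have h2 : ((A k i) ^ 2) p q = ((A i k)ᴴ * (A i k)) p q := by
          rw [(hHerm i k).eq, ← sq, hsymm]
        rw [h2, Matrix.mul_apply]
        exact Finset.sum_congr rfl fun r _ => by
          rw [if_neg hik, if_neg hik, Matrix.conjTranspose_apply]
    rw [Finset.sum_congr rfl fun i _ => step1 i,
      ← Finset.add_sum_erase _ _ (Finset.mem_univ k), if_pos rfl, zero_add]
    exact Finset.sum_congr rfl fun i hi => if_neg (Finset.ne_of_mem_erase hi)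
  calc ‖G * Gᴴ‖ = ‖∑ k, C k * (C k)ᴴ‖ := by rw [hdecomp]
    _ ≤ ∑ k, ‖C k * (C k)ᴴ‖ := norm_sum_le _ _
    _ = ∑ k, ‖∑ j ∈ Finset.univ.erase k, (A k j) ^ 2‖ := by
        refine Finset.sum_congr rfl fun k _ => ?_
        rw [← hCol k]
        rw [Matrix.l2_opNorm_conjTranspose_mul_self]
        rw [← Matrix.l2_opNorm_conjTranspose (C k), ← Matrix.l2_opNorm_conjTranspose_mul_self,
          Matrix.conjTranspose_conjTranspose]
end
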